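/- arXiv:1511.08415 — 3 statements merged into one kernel-verified Lean document; each statement's English description precedes it below -/
import Mathlib

section
/- Let h be a positive integer. For h ≥ 1 and all m with 2^h ≤ m ≤ (1 + √(m/(m−1)))^h, the generalised golden ratio of the ternary alphabet {0, 1, m/(m−1)} equals m^{1/h}. -/
/-
Write `S = M / (β - 1)` and `t_k` for the value of the digits of `u` after position `k`.
When the alphabet `{0, 1, M}` has no gaps at `β` (e.g. `M ≤ 2`, `β ≤ 1 + M`), every point of
`[0, S]` has a greedy expansion, so `u` is a unique expansion exactly when no digit can be
exchanged for another: `t_k < 1` after a `0`, `S - 1 < t_k < M - 1` after a `1`, and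
`S - (M - 1) < t_k` after an `M`.

For `β > G = m^(1/h)` the word `(1 0^(h-1))^ω` satisfies these conditions. For `1 < β < G` they
forbid the factors `0M` and `1M`, so a non-trivial unique expansion contains a `1`, after which it
is a concatenation of blocks `1 0^(n-1)` with `n ≥ h`. Comparing the supremum and the infimum of
the values `t_k` at the `1`s with `1 / (β^h - 1)`, the fixed point of `t ↦ (1 + t) / β^h`, a
block with `n > h` violates `S - 1 < t_k` (this is where `(G - 1)^2 ≤ M` enters, through the
monotonicity of `β - 1 + 1 / (β + ⋯ + β^h)`), while blocks all of length `h` force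
`t_k ≥ 1 / (β^h - 1) > M - 1`.
-/

/-- Digit sequences over the ternary alphabet {0, 1, M}. -/
def IsDigits (M : ℝ) (u : ℕ → ℝ) : Prop :=
  ∀ k, u k = 0 ∨ u k = 1 ∨ u k = M

/-- u is the unique β-expansion of its value over {0, 1, M}. -/
def IsUniqueExpansion (M β : ℝ) (u : ℕ → ℝ) : Prop :=
  IsDigits M u ∧ ∀ v : ℕ → ℝ, IsDigits M v →
    (∑' k : ℕ, v k / β ^ (k + 1)) = (∑' k : ℕ, u k / β ^ (k + 1)) → v = u

/-- G is the generalised golden ratio of the alphabet {0, 1, M}: below G only trivial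
unique expansions, above G some non-trivial unique expansion. -/
def IsGGR (M G : ℝ) : Prop :=
  1 < G ∧
  (∀ β : ℝ, 1 < β → β < G → ∀ u : ℕ → ℝ, IsUniqueExpansion M β u →
    u = (fun _ => 0) ∨ u = (fun _ => M)) ∧
  (∀ β : ℝ, G < β → ∃ u : ℕ → ℝ, IsUniqueExpansion M β u ∧
    u ≠ (fun _ => 0) ∧ u ≠ (fun _ => M))

open Finset Filter Topology

noncomputable def expansionValue (β : ℝ) (u : ℕ → ℝ) : ℝ := ∑' k, u k / β ^ (k + 1)

-- The digits strictly after position `k`; `u k` itself is not included.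
noncomputable def tailValue (β : ℝ) (u : ℕ → ℝ) (k : ℕ) : ℝ :=
  expansionValue β fun j => u (j + (k + 1))

section Val

variable {β C : ℝ} {u : ℕ → ℝ}

lemma summable_div_pow (hβ : 1 < β) (hu : ∀ k, |u k| ≤ C) :
    Summable fun k => u k / β ^ (k + 1) := by
  have hβ0 : 0 < β := by linarith
  refine Summable.of_norm_bounded ((summable_geometric_of_lt_one (inv_nonneg.2 hβ0.le)
    (inv_lt_one_of_one_lt₀ hβ)).mul_left (C / β)) fun k => ?_
  rw [Real.norm_eq_abs, abs_div, abs_of_pos (pow_pos hβ0 _), inv_pow, pow_succ]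
  calc |u k| / (β ^ k * β) ≤ C / (β ^ k * β) := by gcongr; exact hu k
    _ = C / β * (β ^ k)⁻¹ := by ring

lemma expansionValue_nonneg (hβ : 0 ≤ β) (hu : ∀ k, 0 ≤ u k) : 0 ≤ expansionValue β u :=
  tsum_nonneg fun k => div_nonneg (hu k) (pow_nonneg hβ _)

lemma expansionValue_const (hβ : 1 < β) (c : ℝ) :
    expansionValue β (fun _ => c) = c / (β - 1) := by
  have hβ0 : 0 < β := by linarith
  have h : ∀ k : ℕ, c / β ^ (k + 1) = c / β * β⁻¹ ^ k := fun k => by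
    rw [inv_pow, pow_succ]; ring
  rw [expansionValue, tsum_congr h, tsum_mul_left,
    tsum_geometric_of_lt_one (inv_nonneg.2 hβ0.le) (inv_lt_one_of_one_lt₀ hβ)]
  have : β - 1 ≠ 0 := by linarith
  field_simp

lemma expansionValue_le (hβ : 1 < β) (h0 : ∀ k, 0 ≤ u k) (hC : ∀ k, u k ≤ C) :
    expansionValue β u ≤ C / (β - 1) := by
  have hβ0 : 0 < β := by linarith
  rw [← expansionValue_const hβ C]
  refine Summable.tsum_le_tsum (fun k => by gcongr; exact hC k)
    (summable_div_pow hβ fun k => (abs_of_nonneg (h0 k)).trans_le (hC k))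
    (summable_div_pow hβ (C := |C|) fun _ => le_rfl)

lemma expansionValue_eq_sum_add (hβ : 1 < β) (hu : ∀ k, |u k| ≤ C) (k : ℕ) :
    expansionValue β u =
      ∑ j ∈ range k, u j / β ^ (j + 1) + expansionValue β (fun j => u (j + k)) / β ^ k := by
  rw [expansionValue, ← (summable_div_pow hβ hu).sum_add_tsum_nat_add k, expansionValue,
    ← tsum_div_const]
  congr 2 with j
  rw [div_div, ← pow_add, add_right_comm]

lemma expansionValue_eq_div (hβ : 1 < β) (hu : ∀ k, |u k| ≤ C) :
    expansionValue β u = (u 0 + expansionValue β fun j => u (j + 1)) / β := by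
  rw [expansionValue_eq_sum_add hβ hu 1]
  simp [add_div]

lemma expansionValue_eq_sum_add_tailValue (hβ : 1 < β) (hu : ∀ k, |u k| ≤ C) (k : ℕ) :
    expansionValue β u =
      ∑ j ∈ range k, u j / β ^ (j + 1) + (u k + tailValue β u k) / β ^ (k + 1) := by
  rw [expansionValue_eq_sum_add hβ hu (k + 1), sum_range_succ, tailValue]
  ring

lemma mul_tailValue (hβ : 1 < β) (hu : ∀ k, |u k| ≤ C) (k : ℕ) :
    β * tailValue β u k = u (k + 1) + tailValue β u (k + 1) := by
  have hβ0 : β ≠ 0 := by positivity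
  rw [tailValue, expansionValue_eq_div hβ fun j => hu _, tailValue, zero_add]
  field_simp
  congr 3 with j
  rw [add_assoc, add_comm 1]

lemma pow_mul_tailValue (hβ : 1 < β) (hu : ∀ k, |u k| ≤ C) {k n : ℕ} (hn : 0 < n)
    (hz : ∀ i, 0 < i → i < n → u (k + i) = 0) :
    β ^ n * tailValue β u k = u (k + n) + tailValue β u (k + n) := by
  induction n, hn using Nat.le_induction with
  | base => simpa using mul_tailValue hβ hu k
  | succ n hn ih =>
    calc β ^ (n + 1) * tailValue β u k = β * (β ^ n * tailValue β u k) := by ring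
      _ = β * tailValue β u (k + n) := by
        rw [ih fun i hi hin => hz i hi (by omega), hz n hn (by omega), zero_add]
      _ = u (k + (n + 1)) + tailValue β u (k + (n + 1)) := mul_tailValue hβ hu (k + n)

lemma tailValue_eq_zero {k : ℕ} (h : ∀ j, k < j → u j = 0) : tailValue β u k = 0 := by
  have hz : ∀ j, u (j + (k + 1)) = 0 := fun j => h _ (by omega)
  simp [tailValue, expansionValue, hz]

end Val

section Digits

variable {M β : ℝ} {u : ℕ → ℝ}

lemma IsDigits.nonneg (hM : 0 ≤ M) (hu : IsDigits M u) (k : ℕ) : 0 ≤ u k := by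
  rcases hu k with h | h | h <;> rw [h] <;> linarith

lemma IsDigits.le (hM : 1 ≤ M) (hu : IsDigits M u) (k : ℕ) : u k ≤ M := by
  rcases hu k with h | h | h <;> rw [h] <;> linarith

lemma IsDigits.abs_le (hM : 0 ≤ M) (hu : IsDigits M u) (k : ℕ) : |u k| ≤ 1 + M := by
  rcases hu k with h | h | h <;> rw [h] <;> simp [abs_of_nonneg hM] <;> linarith

lemma IsDigits.tailValue_nonneg (hM : 0 ≤ M) (hβ : 0 ≤ β) (hu : IsDigits M u) (k : ℕ) :
    0 ≤ tailValue β u k :=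
  expansionValue_nonneg hβ fun _ => hu.nonneg hM _

lemma IsDigits.tailValue_le (hM : 1 ≤ M) (hβ : 1 < β) (hu : IsDigits M u) (k : ℕ) :
    tailValue β u k ≤ M / (β - 1) :=
  expansionValue_le hβ (fun _ => hu.nonneg (by linarith) _) fun _ => hu.le hM _

end Digits

section Greedy

variable {M β : ℝ}

noncomputable def greedyDigit (M β y : ℝ) : ℝ :=
  if β * y ≤ M / (β - 1) then 0 else if β * y ≤ M / (β - 1) + 1 then 1 else M

noncomputable def greedyRem (M β x : ℝ) : ℕ → ℝ
  | 0 => x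
  | n + 1 => β * greedyRem M β x n - greedyDigit M β (greedyRem M β x n)

lemma isDigits_greedyDigit (x : ℝ) :
    IsDigits M fun n => greedyDigit M β (greedyRem M β x n) := by
  intro n
  simp only [greedyDigit]
  split_ifs <;> simp

-- With `S = M / (β - 1)`, `hβM` and `hgap` say that `β • [0, S]` is covered by `[0, S]`,
-- `1 + [0, S]` and `M + [0, S]`: the alphabet has no gaps.
lemma greedyRem_mem (hβ : 1 < β) (hβM : β - 1 ≤ M) (hgap : M - 1 ≤ M / (β - 1)) {x : ℝ}
    (hx : x ∈ Set.Icc 0 (M / (β - 1))) (n : ℕ) :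
    greedyRem M β x n ∈ Set.Icc 0 (M / (β - 1)) := by
  have hS1 : 1 ≤ M / (β - 1) := by rw [le_div_iff₀ (by linarith)]; linarith
  have hβS : β * (M / (β - 1)) = M / (β - 1) + M := by
    field_simp [show β - 1 ≠ 0 by linarith]; ring
  induction n with
  | zero => exact hx
  | succ n ih =>
    obtain ⟨h0, hS⟩ := ih
    have : β * greedyRem M β x n ≤ M / (β - 1) + M := by
      rw [← hβS]; exact mul_le_mul_of_nonneg_left hS (by linarith)
    simp only [greedyRem, greedyDigit, Set.mem_Icc]
    split_ifs with h1 h2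
    · constructor <;> nlinarith
    · constructor <;> linarith
    · constructor <;> linarith

lemma eq_sum_add_greedyRem (x : ℝ) (hβ : β ≠ 0) (n : ℕ) :
    x = ∑ j ∈ range n, greedyDigit M β (greedyRem M β x j) / β ^ (j + 1)
      + greedyRem M β x n / β ^ n := by
  induction n with
  | zero => simp [greedyRem]
  | succ n ih =>
    rw [sum_range_succ, greedyRem]
    conv_lhs => rw [ih]
    field_simp
    ring

lemma exists_isDigits_expansionValue_eq (hβ : 1 < β) (hβM : β - 1 ≤ M)
    (hgap : M - 1 ≤ M / (β - 1)) {x : ℝ} (hx : x ∈ Set.Icc 0 (M / (β - 1))) :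
    ∃ w, IsDigits M w ∧ expansionValue β w = x := by
  have hβ0 : 0 < β := by linarith
  have hM : 0 ≤ M := by linarith
  have hrem := greedyRem_mem hβ hβM hgap hx
  have hlim : Tendsto (fun n => greedyRem M β x n / β ^ n) atTop (𝓝 0) := by
    have hgeom : Tendsto (fun n => M / (β - 1) * β⁻¹ ^ n) atTop (𝓝 0) := by
      simpa using (tendsto_pow_atTop_nhds_zero_of_lt_one (inv_nonneg.2 hβ0.le)
        (inv_lt_one_of_one_lt₀ hβ)).const_mul (M / (β - 1))
    refine squeeze_zero (fun n => div_nonneg (hrem n).1 (by positivity)) (fun n => ?_) hgeom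
    rw [inv_pow, ← div_eq_mul_inv]
    exact div_le_div_of_nonneg_right (hrem n).2 (by positivity)
  have hw := isDigits_greedyDigit (M := M) (β := β) x
  refine ⟨_, hw, HasSum.tsum_eq ?_⟩
  rw [(summable_div_pow hβ (hw.abs_le hM)).hasSum_iff_tendsto_nat]
  refine (by simpa using tendsto_const_nhds.sub hlim :
    Tendsto (fun n => x - greedyRem M β x n / β ^ n) atTop (𝓝 x)).congr fun n => ?_
  linarith [eq_sum_add_greedyRem (M := M) x hβ0.ne' n]

end Greedy

section Uniqueness

variable {M β : ℝ} {u v : ℕ → ℝ}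

lemma add_tailValue_eq_of_expansionValue_eq {C : ℝ} (hβ : 1 < β) (hu : ∀ k, |u k| ≤ C)
    (hv : ∀ k, |v k| ≤ C) (hval : expansionValue β v = expansionValue β u) {k : ℕ}
    (hpre : ∀ j < k, v j = u j) : v k + tailValue β v k = u k + tailValue β u k := by
  rw [expansionValue_eq_sum_add_tailValue hβ hv k, expansionValue_eq_sum_add_tailValue hβ hu k,
    sum_congr rfl fun j hj => by rw [hpre j (mem_range.1 hj)], add_right_inj] at hval
  exact (div_left_inj' (pow_ne_zero _ (by positivity))).1 hval

lemma IsUniqueExpansion.add_tailValue_sub_notMem_Icc (hβ : 1 < β) (hβM : β - 1 ≤ M)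
    (hgap : M - 1 ≤ M / (β - 1)) (hu : IsUniqueExpansion M β u) {k : ℕ} {d : ℝ}
    (hd : d = 0 ∨ d = 1 ∨ d = M) (hne : d ≠ u k) :
    u k + tailValue β u k - d ∉ Set.Icc 0 (M / (β - 1)) := by
  intro hmem
  have hM : 0 ≤ M := by linarith
  obtain ⟨w, hw, hwval⟩ := exists_isDigits_expansionValue_eq hβ hβM hgap hmem
  classical
  let v : ℕ → ℝ := fun j => if j < k then u j else if j = k then d else w (j - (k + 1))
  have hv : IsDigits M v := by
    intro j
    dsimp only [v]
    split_ifs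
    exacts [hu.1 j, hd, hw _]
  have hvk : v k = d := by simp [v]
  have htail : tailValue β v k = expansionValue β w := by
    unfold tailValue
    congr 1 with j
    simp [v, show ¬j + (k + 1) < k by omega, show j + (k + 1) ≠ k by omega]
  have hval : expansionValue β v = expansionValue β u := by
    rw [expansionValue_eq_sum_add_tailValue hβ (hv.abs_le hM) k,
      expansionValue_eq_sum_add_tailValue hβ (hu.1.abs_le hM) k, hvk, htail, hwval,
      sum_congr rfl fun j hj =>
        (by simp [v, mem_range.1 hj] : v j / β ^ (j + 1) = u j / β ^ (j + 1))]
    ring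
  exact hne (by simpa [hvk] using congrFun (hu.2 v hv hval) k)

section Necessary

variable (hM : 1 < M) (hβ : 1 < β) (hβM : β - 1 ≤ M) (hgap : M - 1 ≤ M / (β - 1))
  (hu : IsUniqueExpansion M β u)
include hM hβ hβM hgap hu

lemma IsUniqueExpansion.tailValue_lt_one {k : ℕ} (hk : u k = 0) : tailValue β u k < 1 := by
  by_contra! h
  exact hu.add_tailValue_sub_notMem_Icc hβ hβM hgap (d := 1) (by simp) (by rw [hk]; norm_num)
    ⟨by linarith, by linarith [hu.1.tailValue_le hM.le hβ k]⟩

lemma IsUniqueExpansion.tailValue_lt_sub_one {k : ℕ} (hk : u k = 1) :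
    tailValue β u k < M - 1 := by
  by_contra! h
  exact hu.add_tailValue_sub_notMem_Icc hβ hβM hgap (d := M) (by simp) (by rw [hk]; exact hM.ne')
    ⟨by linarith, by linarith [hu.1.tailValue_le hM.le hβ k]⟩

lemma IsUniqueExpansion.sub_one_lt_tailValue {k : ℕ} (hk : u k = 1) :
    M / (β - 1) - 1 < tailValue β u k := by
  by_contra! h
  exact hu.add_tailValue_sub_notMem_Icc hβ hβM hgap (d := 0) (by simp) (by rw [hk]; norm_num)
    ⟨by linarith [hu.1.tailValue_nonneg (β := β) (by linarith) (by linarith) k], by linarith⟩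

lemma IsUniqueExpansion.sub_lt_tailValue {k : ℕ} (hk : u k = M) :
    M / (β - 1) - (M - 1) < tailValue β u k := by
  by_contra! h
  exact hu.add_tailValue_sub_notMem_Icc hβ hβM hgap (d := 1) (by simp) (by rw [hk]; exact hM.ne)
    ⟨by linarith [hu.1.tailValue_nonneg (β := β) (by linarith) (by linarith) k], by linarith⟩

end Necessary

lemma isUniqueExpansion_of_tailValue (hM : 1 < M) (hβ : 1 < β) (hu : IsDigits M u)
    (h0 : ∀ k, u k = 0 → tailValue β u k < 1)
    (h1 : ∀ k, u k = 1 → tailValue β u k < M - 1 ∧ M / (β - 1) - 1 < tailValue β u k)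
    (hMk : ∀ k, u k = M → M / (β - 1) - (M - 1) < tailValue β u k) :
    IsUniqueExpansion M β u := by
  classical
  refine ⟨hu, fun v hv hval => ?_⟩
  by_contra hne
  have hex : ∃ k, v k ≠ u k := by
    by_contra! h
    exact hne (funext h)
  set k := Nat.find hex
  have hdiff : v k ≠ u k := Nat.find_spec hex
  have hkey := add_tailValue_eq_of_expansionValue_eq hβ (hu.abs_le (by linarith))
    (hv.abs_le (by linarith)) hval (k := k) fun j hj => not_not.1 (Nat.find_min hex hj)
  have hv0 := hv.tailValue_nonneg (β := β) (by linarith) (by linarith) k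
  have hvS := hv.tailValue_le hM.le hβ k
  rcases hu k with hk | hk | hk
  · have := h0 k hk
    rcases hv k with hk' | hk' | hk'
    all_goals first | exact hdiff (hk'.trans hk.symm) | linarith
  · have := h1 k hk
    rcases hv k with hk' | hk' | hk'
    all_goals first | exact hdiff (hk'.trans hk.symm) | linarith
  · have := hMk k hk
    rcases hv k with hk' | hk' | hk'
    all_goals first | exact hdiff (hk'.trans hk.symm) | linarith

end Uniqueness

section PowSum

def powSum (h : ℕ) (x : ℝ) : ℝ := ∑ i ∈ range h, x ^ (i + 1)

variable {h : ℕ} {a b : ℝ}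

lemma powSum_mul_sub_one (h : ℕ) (x : ℝ) : powSum h x * (x - 1) = x * (x ^ h - 1) := by
  simp only [powSum, pow_succ']
  rw [← mul_sum, mul_assoc, geom_sum_mul]

lemma natCast_le_powSum (ha : 1 ≤ a) : (h : ℝ) ≤ powSum h a := by
  simpa [powSum] using sum_le_sum fun i (_ : i ∈ range h) => one_le_pow₀ (n := i + 1) ha

lemma powSum_sub_powSum_le (ha : 1 ≤ a) (hab : a ≤ b) :
    powSum h b - powSum h a ≤ (b - a) * powSum h a * powSum h b := by
  rw [powSum, powSum, ← sum_sub_distrib, mul_sum]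
  refine sum_le_sum fun i hi => ?_
  have hb : 0 ≤ b := by linarith
  have hmv : b ^ (i + 1) - a ^ (i + 1) ≤ (b - a) * (i + 1) * b ^ i := by
    have := abs_pow_sub_pow_le b a (i + 1)
    rwa [abs_of_nonneg (sub_nonneg.2 (pow_le_pow_left₀ (by linarith) hab _)),
      abs_of_nonneg (sub_nonneg.2 hab), abs_of_nonneg hb, abs_of_nonneg (by linarith : 0 ≤ a),
      max_eq_left hab, Nat.add_sub_cancel, Nat.cast_succ] at this
  have hi : (i : ℝ) + 1 ≤ powSum h a :=
    le_trans (by exact_mod_cast mem_range.1 hi) (natCast_le_powSum ha)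
  have hba : 0 ≤ b - a := by linarith
  calc b ^ (i + 1) - a ^ (i + 1) ≤ (b - a) * (i + 1) * b ^ i := hmv
    _ ≤ (b - a) * powSum h a * b ^ i :=
      mul_le_mul_of_nonneg_right (mul_le_mul_of_nonneg_left hi hba) (by positivity)
    _ ≤ (b - a) * powSum h a * b ^ (i + 1) :=
      mul_le_mul_of_nonneg_left (pow_le_pow_right₀ (by linarith) (Nat.le_succ i))
        (mul_nonneg hba (by linarith))

lemma one_div_powSum_sub_le (hh : 1 ≤ h) (ha : 1 ≤ a) (hab : a ≤ b) :
    1 / powSum h a - 1 / powSum h b ≤ b - a := by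
  have hQa : 0 < powSum h a := lt_of_lt_of_le (by exact_mod_cast hh) (natCast_le_powSum ha)
  have hQb : 0 < powSum h b :=
    lt_of_lt_of_le (by exact_mod_cast hh) (natCast_le_powSum (ha.trans hab))
  rw [div_sub_div _ _ hQa.ne' hQb.ne', div_le_iff₀ (mul_pos hQa hQb)]
  linarith [powSum_sub_powSum_le (h := h) ha hab]

end PowSum

lemma one_div_mul_pow_sub_one_le {h : ℕ} (hh : 1 ≤ h) {m G β : ℝ} (hm : 1 < m)
    (hG : G ^ h = m) (hGM : (G - 1) ^ 2 ≤ m / (m - 1)) (hβ : 1 < β) (hβG : β ≤ G) :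
    1 / (β * (β ^ h - 1)) ≤ m / (m - 1) / (β - 1) - 1 := by
  have hm1 : 0 < m - 1 := by linarith
  have hβ1 : 0 < β - 1 := by linarith
  have hGm : 0 < G * (m - 1) := mul_pos (by linarith) hm1
  have hQG : 1 / powSum h G = (G - 1) / (G * (m - 1)) := by
    have hQ : 0 < powSum h G :=
      lt_of_lt_of_le (by exact_mod_cast hh) (natCast_le_powSum (by linarith))
    rw [← hG, ← powSum_mul_sub_one]
    field_simp [show G - 1 ≠ 0 by linarith]
  have hGside : G - 1 + (G - 1) / (G * (m - 1)) ≤ m / (m - 1) := by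
    rw [le_div_iff₀ hm1] at hGM
    rw [add_div' _ _ _ hGm.ne', div_le_div_iff₀ hGm hm1]
    nlinarith
  have hQβ : 1 / powSum h β ≤ m / (m - 1) - (β - 1) := by
    linarith [one_div_powSum_sub_le hh hβ.le hβG]
  rwa [← powSum_mul_sub_one, div_sub_one hβ1.ne', ← div_div,
    div_le_div_iff_of_pos_right hβ1]

-- Equivalently `M < (β - 1) β^h / (β^h - 1)`. At `β = 2` the right side is
-- `2^h / (2^h - 1) ≥ M`, and it increases with `β`; the mean value bound `hmv` quantifies this.
lemma div_sub_one_lt_one_div_pow_sub_one {h : ℕ} (hh : 1 ≤ h) {m β : ℝ} (hm : 2 ^ h ≤ m)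
    (hβ : 2 < β) : m / (m - 1) / (β - 1) - 1 < 1 / (β ^ h - 1) := by
  have ha : (h : ℝ) + 1 ≤ 2 ^ h := by exact_mod_cast (Nat.lt_two_pow_self : h < 2 ^ h)
  set a : ℝ := 2 ^ h
  set x : ℝ := β ^ h
  have hh' : (1 : ℝ) ≤ h := by exact_mod_cast hh
  have hxa : a ≤ x := pow_le_pow_left₀ (by norm_num) hβ.le h
  have hpow : x = β * β ^ (h - 1) := by rw [← pow_succ', Nat.sub_add_cancel hh]
  have hmv : x - a ≤ (β - 2) * h * β ^ (h - 1) := by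
    have := abs_pow_sub_pow_le β 2 h
    rwa [abs_of_nonneg (by linarith), abs_of_nonneg (by linarith), abs_of_pos (by linarith),
      abs_of_pos (by norm_num), max_eq_left hβ.le] at this
  have hβpos : 0 < β ^ (h - 1) := by positivity
  have hkey : a * (x - 1) < (β - 1) * x * (a - 1) := by
    have hβa : (h : ℝ) < β * (a - 1) := by nlinarith
    have : (h : ℝ) * β ^ (h - 1) < x * (a - 1) := by
      rw [hpow, mul_right_comm]; exact mul_lt_mul_of_pos_right hβa hβpos
    nlinarith
  have hM : m / (m - 1) * (a - 1) ≤ a := by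
    rw [div_mul_eq_mul_div, div_le_iff₀ (by linarith)]; nlinarith
  rw [div_sub_one (by linarith), div_lt_div_iff₀ (by linarith) (by linarith)]
  nlinarith

section PeriodicWord

/-- The word `(1 0^(h-1))^ω`. -/
def periodicWord (h j : ℕ) : ℝ := if h ∣ j then 1 else 0

variable {M β : ℝ} {h : ℕ}

lemma isDigits_periodicWord : IsDigits M (periodicWord h) := fun j => by
  unfold periodicWord; split_ifs <;> simp

lemma abs_periodicWord_le (j : ℕ) : |periodicWord h j| ≤ 1 := by
  unfold periodicWord; split_ifs <;> simp

lemma tailValue_periodicWord_add_self (k : ℕ) :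
    tailValue β (periodicWord h) (k + h) = tailValue β (periodicWord h) k := by
  unfold tailValue periodicWord
  congr 1 with j
  simp only [show j + (k + h + 1) = j + (k + 1) + h by ring, Nat.dvd_add_self_right]

lemma tailValue_periodicWord_of_dvd (hh : 0 < h) (hβ : 1 < β) {k : ℕ} (hk : h ∣ k) :
    tailValue β (periodicWord h) k = 1 / (β ^ h - 1) := by
  have hz : ∀ i, 0 < i → i < h → periodicWord h (k + i) = 0 := fun i hi hih =>
    if_neg fun hd => absurd (Nat.le_of_dvd hi ((Nat.dvd_add_right hk).1 hd)) (by omega)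
  have := pow_mul_tailValue hβ abs_periodicWord_le hh hz
  rw [tailValue_periodicWord_add_self, periodicWord, if_pos (dvd_add hk dvd_rfl)] at this
  have : 1 < β ^ h := one_lt_pow₀ hβ hh.ne'
  rw [eq_div_iff (by linarith)]
  linarith

lemma tailValue_periodicWord_le (hh : 0 < h) (hβ : 1 < β) (k : ℕ) :
    tailValue β (periodicWord h) k ≤ (1 + 1 / (β ^ h - 1)) / β := by
  classical
  have hk : k + 1 ≤ h * (k + 1) := Nat.le_mul_of_pos_left (k + 1) hh
  have hex : ∃ n, 0 < n ∧ h ∣ k + n :=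
    ⟨h * (k + 1) - k, by omega, by rw [Nat.add_sub_cancel' (by omega)]; exact dvd_mul_right _ _⟩
  obtain ⟨hn, hdvd⟩ := Nat.find_spec hex
  have := pow_mul_tailValue hβ abs_periodicWord_le hn fun i hi hin =>
    if_neg fun hd => Nat.find_min hex hin ⟨hi, hd⟩
  rw [periodicWord, if_pos hdvd, tailValue_periodicWord_of_dvd hh hβ hdvd] at this
  have hβn : β ≤ β ^ Nat.find hex := le_self_pow₀ hβ.le hn.ne'
  have ht : 0 ≤ tailValue β (periodicWord h) k :=
    expansionValue_nonneg (by linarith) fun j => by unfold periodicWord; split_ifs <;> norm_num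
  rw [le_div_iff₀ (by linarith)]
  nlinarith

lemma isUniqueExpansion_periodicWord (hh : 0 < h) (hM : 1 < M) (hβ : 1 < β)
    (h1 : 1 / (β ^ h - 1) < M - 1) (h2 : M / (β - 1) - 1 < 1 / (β ^ h - 1))
    (h3 : 1 + 1 / (β ^ h - 1) < β) : IsUniqueExpansion M β (periodicWord h) := by
  refine isUniqueExpansion_of_tailValue hM hβ isDigits_periodicWord
    (fun k _ => (tailValue_periodicWord_le hh hβ k).trans_lt ((div_lt_one (by linarith)).2 h3))
    (fun k hk => ?_) (fun k hk => ?_)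
  · have hd : h ∣ k := by
      by_contra hd
      simp [periodicWord, hd] at hk
    rw [tailValue_periodicWord_of_dvd hh hβ hd]
    exact ⟨h1, h2⟩
  · unfold periodicWord at hk
    split_ifs at hk <;> linarith

end PeriodicWord

section Contraction

variable {A : Set ℝ} {c : ℝ}

lemma csSup_le_one_div_sub_one (hc : 1 < c) (hne : A.Nonempty) (hbdd : BddAbove A)
    (h : ∀ x ∈ A, ∃ y ∈ A, c * x ≤ 1 + y) : sSup A ≤ 1 / (c - 1) := by
  have hs : sSup A ≤ (1 + sSup A) / c := csSup_le hne fun x hx => by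
    obtain ⟨y, hy, hxy⟩ := h x hx
    rw [le_div_iff₀ (by linarith), mul_comm]
    linarith [le_csSup hbdd hy]
  rw [le_div_iff₀ (by linarith)] at hs ⊢
  linarith

lemma one_div_sub_one_le_csInf (hc : 1 < c) (hne : A.Nonempty) (hbdd : BddBelow A)
    (h : ∀ x ∈ A, ∃ y ∈ A, 1 + y ≤ c * x) : 1 / (c - 1) ≤ sInf A := by
  have hs : (1 + sInf A) / c ≤ sInf A := le_csInf hne fun x hx => by
    obtain ⟨y, hy, hxy⟩ := h x hx
    rw [div_le_iff₀ (by linarith), mul_comm]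
    linarith [csInf_le hbdd hy]
  rw [div_le_iff₀ (by linarith)] at hs ⊢
  linarith

end Contraction

namespace IsUniqueExpansion

variable {M β : ℝ} {u : ℕ → ℝ} (hM : 1 < M) (hβ : 1 < β) (hβM : β - 1 < M)
  (hgap : M - 1 < M / (β - 1)) (hu : IsUniqueExpansion M β u)
include hM hβ hβM hgap hu

lemma succ_ne_of_eq_zero (hsq : (β - 1) ^ 2 ≤ M) {k : ℕ} (hk : u k = 0) : u (k + 1) ≠ M := by
  intro hk1
  have h0 := hu.tailValue_lt_one hM hβ hβM.le hgap.le hk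
  have h1 := hu.sub_lt_tailValue hM hβ hβM.le hgap.le hk1
  have hrec := mul_tailValue hβ (hu.1.abs_le (by linarith)) k
  have hS : M / (β - 1) < β - 1 := by nlinarith
  rw [div_lt_iff₀ (by linarith)] at hS
  nlinarith

lemma succ_ne_of_eq_one (hβM1 : β * (M - 1) ≤ M) {k : ℕ} (hk : u k = 1) :
    u (k + 1) ≠ M := by
  intro hk1
  have h1 := hu.tailValue_lt_sub_one hM hβ hβM.le hgap.le hk
  have h0 := hu.1.tailValue_nonneg (β := β) (by linarith) (by linarith) (k + 1)
  have hrec := mul_tailValue hβ (hu.1.abs_le (by linarith)) k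
  nlinarith

lemma eq_zero_or_eq_one_of_le (hsq : (β - 1) ^ 2 ≤ M) (hβM1 : β * (M - 1) ≤ M) {k : ℕ}
    (hk : u k = 1) : ∀ j, k ≤ j → u j = 0 ∨ u j = 1 := by
  refine Nat.le_induction (Or.inr hk) fun j _ ih => ?_
  rcases hu.1 (j + 1) with h | h | h
  · exact Or.inl h
  · exact Or.inr h
  · rcases ih with h' | h'
    exacts [absurd h (succ_ne_of_eq_zero hM hβ hβM hgap hu hsq h'),
      absurd h (succ_ne_of_eq_one hM hβ hβM hgap hu hβM1 h')]

lemma exists_gt_ne_zero {k : ℕ} (hk : u k ≠ 0) : ∃ j, k < j ∧ u j ≠ 0 := by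
  by_contra! hz
  have ht : tailValue β u k = 0 := tailValue_eq_zero hz
  have hS : 1 < M / (β - 1) := (one_lt_div (by linarith)).2 hβM
  rcases hu.1 k with h | h | h
  · exact hk h
  · linarith [hu.sub_one_lt_tailValue hM hβ hβM.le hgap.le h]
  · linarith [hu.sub_lt_tailValue hM hβ hβM.le hgap.le h]

lemma exists_eq_one (hsq : (β - 1) ^ 2 ≤ M) (h0 : u ≠ fun _ => 0) (hMc : u ≠ fun _ => M) :
    ∃ p, u p = 1 := by
  by_contra! hno
  obtain ⟨b, hb⟩ : ∃ b, u b ≠ M := by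
    by_contra! h
    exact hMc (funext h)
  have hzero : ∀ j, b ≤ j → u j = 0 :=
    Nat.le_induction ((hu.1 b).resolve_right (not_or.2 ⟨hno b, hb⟩)) fun j _ ih =>
      (hu.1 (j + 1)).resolve_right
        (not_or.2 ⟨hno _, succ_ne_of_eq_zero hM hβ hβM hgap hu hsq ih⟩)
  obtain ⟨a, ha⟩ : ∃ a, u a ≠ 0 := by
    by_contra! h
    exact h0 (funext h)
  have hfreq : ∀ n, ∃ j, n ≤ j ∧ u j ≠ 0 := by
    intro n
    induction n with
    | zero => exact ⟨a, Nat.zero_le a, ha⟩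
    | succ n ih =>
      obtain ⟨j, hnj, hj⟩ := ih
      obtain ⟨j', hjj', hj'⟩ := exists_gt_ne_zero hM hβ hβM hgap hu hj
      exact ⟨j', by omega, hj'⟩
  obtain ⟨j, hbj, hj⟩ := hfreq b
  exact hj (hzero j hbj)

lemma le_of_pow_mul_tailValue_eq {h : ℕ} (hβh : β ^ h * (M - 1) ≤ M) {k n : ℕ}
    (hk : u k = 1) (hkn : u (k + n) = 1)
    (heq : β ^ n * tailValue β u k = 1 + tailValue β u (k + n)) : h ≤ n := by
  by_contra! hn
  have h1 := hu.tailValue_lt_sub_one hM hβ hβM.le hgap.le hk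
  have h2 := hu.sub_one_lt_tailValue hM hβ hβM.le hgap.le hkn
  have hpos : 0 < β ^ n := by positivity
  have hpow : β ^ n * β ≤ β ^ h := by rw [← pow_succ]; exact pow_le_pow_right₀ hβ.le hn
  have hS : M / (β - 1) < β ^ n * (M - 1) := by nlinarith
  rw [div_lt_iff₀ (by linarith)] at hS
  nlinarith

lemma exists_pow_mul_tailValue_eq {h : ℕ} (hh : 0 < h) (hsq : (β - 1) ^ 2 ≤ M)
    (hβh : β ^ h * (M - 1) ≤ M) {k : ℕ} (hk : u k = 1) :
    ∃ n, h ≤ n ∧ u (k + n) = 1 ∧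
      β ^ n * tailValue β u k = 1 + tailValue β u (k + n) := by
  classical
  have hβM1 : β * (M - 1) ≤ M :=
    le_trans (mul_le_mul_of_nonneg_right (le_self_pow₀ hβ.le hh.ne') (by linarith)) hβh
  obtain ⟨j, hkj, hj⟩ := exists_gt_ne_zero hM hβ hβM hgap hu (hk ▸ one_ne_zero)
  have hex : ∃ n, 0 < n ∧ u (k + n) ≠ 0 :=
    ⟨j - k, by omega, by rwa [Nat.add_sub_cancel' hkj.le]⟩
  obtain ⟨hn, hn0⟩ := Nat.find_spec hex
  have hz : ∀ i, 0 < i → i < Nat.find hex → u (k + i) = 0 := fun i hi hin => by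
    by_contra h
    exact Nat.find_min hex hin ⟨hi, h⟩
  have h1 :=
    (eq_zero_or_eq_one_of_le hM hβ hβM hgap hu hsq hβM1 hk _ le_self_add).resolve_left hn0
  have heq : β ^ Nat.find hex * tailValue β u k = 1 + tailValue β u (k + Nat.find hex) := by
    rw [pow_mul_tailValue hβ (hu.1.abs_le (by linarith)) hn hz, h1]
  exact ⟨_, le_of_pow_mul_tailValue_eq hM hβ hβM hgap hu hβh hk h1 heq, h1, heq⟩

lemma tailValue_le_of_eq_one {h : ℕ} (hh : 0 < h) (hsq : (β - 1) ^ 2 ≤ M)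
    (hβh : β ^ h * (M - 1) ≤ M) {k : ℕ} (hk : u k = 1) :
    tailValue β u k ≤ 1 / (β ^ h - 1) := by
  have hbdd : BddAbove (tailValue β u '' {j | u j = 1}) :=
    ⟨M / (β - 1), by rintro _ ⟨j, -, rfl⟩; exact hu.1.tailValue_le hM.le hβ j⟩
  refine (le_csSup hbdd ⟨k, hk, rfl⟩).trans
    (csSup_le_one_div_sub_one (one_lt_pow₀ hβ hh.ne') ⟨_, k, hk, rfl⟩ hbdd ?_)
  rintro _ ⟨j, hj, rfl⟩
  obtain ⟨n, hn, hjn, heq⟩ := exists_pow_mul_tailValue_eq hM hβ hβM hgap hu hh hsq hβh hj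
  refine ⟨_, ⟨j + n, hjn, rfl⟩, heq ▸ mul_le_mul_of_nonneg_right
    (pow_le_pow_right₀ hβ.le hn) (hu.1.tailValue_nonneg (by linarith) (by linarith) j)⟩

lemma pow_mul_tailValue_eq_of_eq_one {h : ℕ} (hh : 0 < h) (hsq : (β - 1) ^ 2 ≤ M)
    (hβh : β ^ h * (M - 1) ≤ M) (hφ : 1 / (β * (β ^ h - 1)) ≤ M / (β - 1) - 1) {k : ℕ}
    (hk : u k = 1) : u (k + h) = 1 ∧ β ^ h * tailValue β u k = 1 + tailValue β u (k + h) := by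
  obtain ⟨n, hn, hkn, heq⟩ := exists_pow_mul_tailValue_eq hM hβ hβM hgap hu hh hsq hβh hk
  rcases hn.eq_or_lt with rfl | hlt
  · exact ⟨hkn, heq⟩
  -- A longer gap would give `t_k ≤ (1 + 1 / (β^h - 1)) / β^(h+1) = 1 / (β (β^h - 1))`,
  -- which is at most `S - 1`.
  exfalso
  have hJ := tailValue_le_of_eq_one hM hβ hβM hgap hu hh hsq hβh hkn
  have hlow := hu.sub_one_lt_tailValue hM hβ hβM.le hgap.le hk
  have ht0 := hu.1.tailValue_nonneg (β := β) (by linarith) (by linarith) k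
  have hβh1 : 1 < β ^ h := one_lt_pow₀ hβ hh.ne'
  have hid : β ^ (h + 1) * (1 / (β * (β ^ h - 1))) = 1 + 1 / (β ^ h - 1) := by
    field_simp [show β ^ h - 1 ≠ 0 by linarith]
    ring
  have hmul : β ^ (h + 1) * tailValue β u k ≤ β ^ (h + 1) * (1 / (β * (β ^ h - 1))) := by
    rw [hid]
    have hpow : β ^ (h + 1) ≤ β ^ n := pow_le_pow_right₀ hβ.le hlt
    linarith [mul_le_mul_of_nonneg_right hpow ht0]
  linarith [le_of_mul_le_mul_left hmul (by positivity)]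

lemma ne_one {h : ℕ} (hh : 0 < h) (hsq : (β - 1) ^ 2 ≤ M) (hβh : β ^ h * (M - 1) < M)
    (hφ : 1 / (β * (β ^ h - 1)) ≤ M / (β - 1) - 1) (k : ℕ) : u k ≠ 1 := by
  intro hk
  have hβh1 : 1 < β ^ h := one_lt_pow₀ hβ hh.ne'
  have hbdd : BddBelow (tailValue β u '' {j | u j = 1}) :=
    ⟨0, by rintro _ ⟨j, -, rfl⟩; exact hu.1.tailValue_nonneg (by linarith) (by linarith) j⟩
  have hJ : 1 / (β ^ h - 1) ≤ sInf (tailValue β u '' {j | u j = 1}) := by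
    refine one_div_sub_one_le_csInf hβh1 ⟨_, k, hk, rfl⟩ hbdd ?_
    rintro _ ⟨j, hj, rfl⟩
    obtain ⟨hjh, heq⟩ :=
      pow_mul_tailValue_eq_of_eq_one hM hβ hβM hgap hu hh hsq hβh.le hφ hj
    exact ⟨_, ⟨j + h, hjh, rfl⟩, heq.ge⟩
  have hk1 := hu.tailValue_lt_sub_one hM hβ hβM.le hgap.le hk
  have hJM : M - 1 < 1 / (β ^ h - 1) := by
    rw [lt_div_iff₀ (by linarith)]
    nlinarith
  linarith [csInf_le hbdd ⟨k, hk, rfl⟩]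

lemma eq_const {h : ℕ} (hh : 0 < h) (hsq : (β - 1) ^ 2 ≤ M) (hβh : β ^ h * (M - 1) < M)
    (hφ : 1 / (β * (β ^ h - 1)) ≤ M / (β - 1) - 1) : u = (fun _ => 0) ∨ u = fun _ => M := by
  by_contra! h
  obtain ⟨p, hp⟩ := exists_eq_one hM hβ hβM hgap hu hsq h.1 h.2
  exact ne_one hM hβ hβM hgap hu hh hsq hβh hφ p hp

end IsUniqueExpansion

lemma two_le_of_two_pow_le {h : ℕ} (hh : 1 ≤ h) {m : ℝ} (hm : 2 ^ h ≤ m) : 2 ≤ m :=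
  le_trans (by simpa using pow_le_pow_right₀ (by norm_num : (1 : ℝ) ≤ 2) hh) hm

lemma IsUniqueExpansion.eq_const_of_lt {h : ℕ} (hh : 1 ≤ h) {m G β : ℝ} {u : ℕ → ℝ}
    (hm : 2 ^ h ≤ m) (hG : G ^ h = m) (hGM : (G - 1) ^ 2 ≤ m / (m - 1)) (hβ : 1 < β)
    (hβG : β < G) (hu : IsUniqueExpansion (m / (m - 1)) β u) :
    u = (fun _ => 0) ∨ u = fun _ => m / (m - 1) := by
  have hm2 := two_le_of_two_pow_le hh hm
  have hm1 : 0 < m - 1 := by linarith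
  have hM : 1 < m / (m - 1) := by rw [lt_div_iff₀ hm1]; linarith
  have hsq : (β - 1) ^ 2 ≤ m / (m - 1) :=
    le_trans (pow_le_pow_left₀ (by linarith) (by linarith : β - 1 ≤ G - 1) 2) hGM
  have hβM : β - 1 < m / (m - 1) := by nlinarith
  have hgap : m / (m - 1) - 1 < m / (m - 1) / (β - 1) := by
    have : m / (m - 1) ≤ 2 := by rw [div_le_iff₀ hm1]; linarith
    linarith [(one_lt_div (by linarith : 0 < β - 1)).2 hβM]
  have hβh : β ^ h * (m / (m - 1) - 1) < m / (m - 1) := by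
    have : β ^ h < m := hG ▸ pow_lt_pow_left₀ hβG (by linarith) (by omega)
    rw [div_sub_one hm1.ne', sub_sub_cancel, mul_one_div]
    exact div_lt_div_of_pos_right this hm1
  exact hu.eq_const hM hβ hβM hgap (by omega) hsq hβh
    (one_div_mul_pow_sub_one_le hh (by linarith) hG hGM hβ hβG.le)

lemma exists_isUniqueExpansion_of_lt {h : ℕ} (hh : 1 ≤ h) {m G β : ℝ} (hm : 2 ^ h ≤ m)
    (hG : G ^ h = m) (hG2 : 2 ≤ G) (hGβ : G < β) :
    ∃ u, IsUniqueExpansion (m / (m - 1)) β u ∧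
      u ≠ (fun _ => 0) ∧ u ≠ fun _ => m / (m - 1) := by
  have hm1 : 0 < m - 1 := by linarith [two_le_of_two_pow_le hh hm]
  have hM : 1 < m / (m - 1) := by rw [lt_div_iff₀ hm1]; linarith
  have hβm : m < β ^ h := hG ▸ pow_lt_pow_left₀ hGβ (by linarith) (by omega)
  have hβ2 : 2 < β := by linarith
  have hJ : 1 / (β ^ h - 1) < 1 := by
    rw [div_lt_one (by linarith)]
    linarith [le_self_pow₀ (by linarith : 1 ≤ β) (by omega : h ≠ 0)]
  refine ⟨periodicWord h, isUniqueExpansion_periodicWord (by omega) hM (by linarith) ?_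
    (div_sub_one_lt_one_div_pow_sub_one hh hm hβ2) (by linarith), fun hc => ?_, fun hc => ?_⟩
  · rw [div_sub_one hm1.ne', sub_sub_cancel]
    exact one_div_lt_one_div_of_lt hm1 (by linarith)
  · simpa [periodicWord] using congrFun hc 0
  · have := congrFun hc 0
    simp only [periodicWord, dvd_zero, if_true] at this
    linarith

/-- for h ≥ 1 and 2^h ≤ m ≤ (1 + √(m/(m−1)))^h, the generalised golden
ratio of {0, 1, m/(m−1)} equals m^{1/h}. -/
theorem stmt_15 (h : ℕ) (hh : 1 ≤ h) (m : ℝ)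
    (h1 : (2 : ℝ) ^ h ≤ m) (h2 : m ≤ (1 + Real.sqrt (m / (m - 1))) ^ h) :
    IsGGR (m / (m - 1)) (m ^ ((1 : ℝ) / h)) := by
  have hm : 2 ≤ m := two_le_of_two_pow_le hh h1
  have hh0 : h ≠ 0 := by omega
  have hG : (m ^ ((1 : ℝ) / h)) ^ h = m := by
    rw [one_div]; exact Real.rpow_inv_natCast_pow (by linarith) hh0
  have hG0 : 0 ≤ m ^ ((1 : ℝ) / h) := Real.rpow_nonneg (by linarith) _
  have hG2 : 2 ≤ m ^ ((1 : ℝ) / h) :=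
    (pow_le_pow_iff_left₀ (by norm_num) hG0 hh0).1 (by rwa [hG])
  have hGM : (m ^ ((1 : ℝ) / h) - 1) ^ 2 ≤ m / (m - 1) := by
    have hle : m ^ ((1 : ℝ) / h) - 1 ≤ √(m / (m - 1)) := by
      have h2' : (m ^ ((1 : ℝ) / h)) ^ h ≤ (1 + √(m / (m - 1))) ^ h := by rwa [hG]
      linarith [(pow_le_pow_iff_left₀ hG0 (by positivity) hh0).1 h2']
    calc _ ≤ √(m / (m - 1)) ^ 2 := pow_le_pow_left₀ (by linarith) hle 2
      _ = m / (m - 1) := Real.sq_sqrt (div_nonneg (by linarith) (by linarith))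
  exact ⟨by linarith, fun β hβ hβG u hu => hu.eq_const_of_lt hh h1 hG hGM hβ hβG,
    fun β hβ => exists_isUniqueExpansion_of_lt hh h1 hG hG2 hβ⟩
end

section
/- For every m ∈ (1,2], the generalised golden ratio G(m) of the alphabet {0,1,m} satisfies 2 ≤ G(m) ≤ 1 + √m. -/
open Filter Topology

noncomputable section
namespace Stmt16

variable {m β C α : ℝ} {u v : ℕ → ℝ}

def val (β : ℝ) (u : ℕ → ℝ) : ℝ := ∑' k : ℕ, u k / β ^ (k + 1)

def shift (n : ℕ) (u : ℕ → ℝ) : ℕ → ℝ := fun k => u (n + k)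

variable {m β C : ℝ} {u v : ℕ → ℝ}

lemma shift_shift (n : ℕ) : shift 1 (shift n u) = shift (n + 1) u := by
  funext k; simp [shift, Nat.add_assoc, Nat.add_comm 1 k]

lemma shift_bounds (hb : ∀ k, 0 ≤ u k ∧ u k ≤ C) (n : ℕ) :
    ∀ k, 0 ≤ shift n u k ∧ shift n u k ≤ C := fun k => hb (n + k)

lemma term_eq (hβ0 : 0 < β) (k : ℕ) : u k / β ^ (k + 1) = u k * β⁻¹ * (β⁻¹) ^ k := by
  rw [div_eq_mul_inv, ← inv_pow, pow_succ, mul_comm ((β⁻¹) ^ k) β⁻¹, mul_assoc]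

lemma inv_lt_one' (hβ : 1 < β) : β⁻¹ < 1 := inv_lt_one_of_one_lt₀ hβ
lemma inv_pos' (hβ : 1 < β) : 0 < β⁻¹ := inv_pos.mpr (lt_trans one_pos hβ)

lemma summable_geom (hβ : 1 < β) : Summable (fun k : ℕ => (β⁻¹) ^ k) :=
  summable_geometric_of_lt_one (inv_pos' hβ).le (inv_lt_one' hβ)

lemma summable_val (hβ : 1 < β) (hb : ∀ k, 0 ≤ u k ∧ u k ≤ C) :
    Summable (fun k => u k / β ^ (k + 1)) := by
  have hβ0 : (0:ℝ) < β := lt_trans one_pos hβ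
  refine Summable.of_nonneg_of_le (fun k => div_nonneg (hb k).1 (pow_nonneg hβ0.le _))
    (fun k => ?_) (((summable_geom hβ).mul_left (C * β⁻¹)))
  rw [term_eq hβ0, mul_assoc, mul_assoc]
  have h2 : (0:ℝ) ≤ β⁻¹ * β⁻¹ ^ k := by positivity
  exact mul_le_mul_of_nonneg_right (hb k).2 h2

lemma val_nonneg (hb : ∀ k, 0 ≤ u k ∧ u k ≤ C) (hβ0 : 0 < β) : 0 ≤ val β u :=
  tsum_nonneg (fun k => div_nonneg (hb k).1 (pow_nonneg hβ0.le _))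

lemma tsum_geom_inv (hβ : 1 < β) : ∑' k : ℕ, β⁻¹ * (β⁻¹) ^ k = 1 / (β - 1) := by
  have hβ0 : (0:ℝ) < β := lt_trans one_pos hβ
  have hne : β - 1 ≠ 0 := sub_ne_zero.mpr hβ.ne'
  rw [tsum_mul_left, tsum_geometric_of_lt_one (inv_pos' hβ).le (inv_lt_one' hβ)]
  have h1 : (1 : ℝ) - β⁻¹ = (β - 1) / β := by field_simp
  rw [h1]
  field_simp

lemma val_le (hβ : 1 < β) (hC : 0 ≤ C) (hb : ∀ k, 0 ≤ u k ∧ u k ≤ C) :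
    val β u ≤ C / (β - 1) := by
  have hβ0 : (0:ℝ) < β := lt_trans one_pos hβ
  have h1 : val β u ≤ ∑' k : ℕ, C * (β⁻¹ * (β⁻¹) ^ k) := by
    refine Summable.tsum_le_tsum (fun k => ?_) (summable_val hβ hb) (((summable_geom hβ).mul_left β⁻¹).mul_left C)
    rw [term_eq hβ0, mul_assoc]
    exact mul_le_mul_of_nonneg_right (hb k).2 (by positivity)
  rw [tsum_mul_left, tsum_geom_inv hβ] at h1
  calc val β u ≤ C * (1 / (β - 1)) := h1
    _ = C / (β - 1) := by ring

lemma val_shift_succ (hβ : 1 < β) (hb : ∀ k, 0 ≤ u k ∧ u k ≤ C) (n : ℕ) :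
    val β (shift n u) = (u n + val β (shift (n + 1) u)) / β := by
  have hβ0 : (0:ℝ) < β := lt_trans one_pos hβ
  have hs : Summable (fun k => shift n u k / β ^ (k + 1)) := summable_val hβ (shift_bounds hb n)
  have h0 := Summable.tsum_eq_zero_add hs
  have h1 : ∀ k : ℕ, shift n u (k + 1) / β ^ (k + 1 + 1) = (shift (n+1) u k / β ^ (k+1)) * β⁻¹ := by
    intro k
    have : shift n u (k+1) = shift (n+1) u k := by
      simp only [shift]; congr 1; omega
    rw [this, pow_succ, div_mul_eq_div_div, div_eq_mul_inv (shift (n+1) u k / β ^ (k+1))]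
  calc val β (shift n u) = shift n u 0 / β ^ 1 + ∑' k : ℕ, shift n u (k+1) / β ^ (k+1+1) := h0
    _ = u n / β + (∑' k : ℕ, shift (n+1) u k / β ^ (k+1)) * β⁻¹ := by
        rw [tsum_congr h1, tsum_mul_right, pow_one]
        simp only [shift, Nat.add_zero]
    _ = (u n + val β (shift (n+1) u)) / β := by
        rw [val]; field_simp

lemma val_prefix (hβ : 1 < β) (hb : ∀ k, 0 ≤ u k ∧ u k ≤ C) (n : ℕ) :
    val β u = (∑ i ∈ Finset.range n, u i / β ^ (i + 1)) + val β (shift n u) / β ^ n := by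
  have hβ0 : (0:ℝ) < β := lt_trans one_pos hβ
  induction n with
  | zero =>
      simp only [Finset.range_zero, Finset.sum_empty, pow_zero, div_one, zero_add]
      have : shift 0 u = u := by funext k; simp [shift]
      rw [this]
  | succ n ih =>
    rw [ih, Finset.sum_range_succ, val_shift_succ hβ hb n]
    have hβn : (β:ℝ) ^ n ≠ 0 := (pow_pos hβ0 n).ne'
    field_simp
    try ring

lemma tail_eq (hβ : 1 < β) (hbu : ∀ k, 0 ≤ u k ∧ u k ≤ C) (hbv : ∀ k, 0 ≤ v k ∧ v k ≤ C)
    (h : val β u = val β v) (k : ℕ) (hpre : ∀ j, j < k → u j = v j) :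
    u k + val β (shift (k + 1) u) = v k + val β (shift (k + 1) v) := by
  have hβ0 : (0:ℝ) < β := lt_trans one_pos hβ
  have hu1 := val_prefix hβ hbu k
  have hv1 := val_prefix hβ hbv k
  have hsum : (∑ i ∈ Finset.range k, u i / β ^ (i + 1)) = ∑ i ∈ Finset.range k, v i / β ^ (i + 1) :=
    Finset.sum_congr rfl (fun i hi => by rw [hpre i (Finset.mem_range.mp hi)])
  have h2 : val β (shift k u) = val β (shift k v) := by
    have hβn : ((β:ℝ) ^ k) ≠ 0 := (pow_pos hβ0 k).ne'
    have := h
    rw [hu1, hv1, hsum] at this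
    have h3 : val β (shift k u) / β ^ k = val β (shift k v) / β ^ k := by linarith
    field_simp at h3
    exact h3
  rw [val_shift_succ hβ hbu k, val_shift_succ hβ hbv k] at h2
  have : (u k + val β (shift (k+1) u)) / β = (v k + val β (shift (k+1) v)) / β := h2
  field_simp at this
  exact this


lemma digit_bounds (hm : 1 ≤ m) (hu : IsDigits m u) : ∀ k, 0 ≤ u k ∧ u k ≤ m := by
  intro k
  rcases hu k with h | h | h <;> rw [h] <;> constructor <;> linarith

def gd (β m x : ℝ) : ℝ := if m ≤ β * x then m else if 1 ≤ β * x then 1 else 0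

def gX (β m x : ℝ) : ℕ → ℝ
  | 0 => x
  | n+1 => β * gX β m x n - gd β m (gX β m x n)

lemma gd_digit (β m x : ℝ) : gd β m x = 0 ∨ gd β m x = 1 ∨ gd β m x = m := by
  unfold gd; split_ifs <;> tauto

lemma gX_invariant (hm : 1 < m) (hβ1 : 1 < β) (hβ2 : β < 2) {x : ℝ}
    (hx0 : 0 ≤ x) (hxA : x ≤ m / (β - 1)) :
    ∀ n, 0 ≤ gX β m x n ∧ gX β m x n ≤ m / (β - 1) := by
  have hb1 : (0:ℝ) < β - 1 := by linarith
  have hA : m < m / (β - 1) := by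
    rw [lt_div_iff₀ hb1]; nlinarith
  intro n
  induction n with
  | zero => exact ⟨hx0, hxA⟩
  | succ n ih =>
    obtain ⟨h0, hA'⟩ := ih
    have hstep : gX β m x (n+1) = β * gX β m x n - gd β m (gX β m x n) := rfl
    rw [hstep]
    unfold gd
    split_ifs with h1 h2
    · constructor
      · linarith
      · have : β * (m / (β-1)) = m / (β-1) + m := by field_simp; ring
        have h3 : β * gX β m x n ≤ β * (m / (β-1)) :=
          mul_le_mul_of_nonneg_left hA' (by linarith)
        linarith
    · push_neg at h1
      constructor
      · linarith
      · linarith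
    · push_neg at h1 h2
      constructor
      · nlinarith
      · nlinarith

lemma gX_partial (hβ1 : 1 < β) {x : ℝ} (n : ℕ) :
    x = (∑ i ∈ Finset.range n, gd β m (gX β m x i) / β ^ (i + 1)) + gX β m x n / β ^ n := by
  have hβ0 : (0:ℝ) < β := by linarith
  induction n with
  | zero => simp [gX]
  | succ n ih =>
    have hstep : gX β m x (n+1) = β * gX β m x n - gd β m (gX β m x n) := rfl
    have hβn : (β:ℝ) ^ n ≠ 0 := (pow_pos hβ0 n).ne'
    have hβn1 : (β:ℝ) ^ (n+1) ≠ 0 := (pow_pos hβ0 (n+1)).ne'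
    have e : gX β m x (n+1) / β ^ (n+1) =
        gX β m x n / β ^ n - gd β m (gX β m x n) / β ^ (n+1) := by
      rw [hstep]; field_simp; ring
    rw [Finset.sum_range_succ, e]
    linarith [ih]

lemma greedy_val (hm : 1 < m) (hβ1 : 1 < β) (hβ2 : β < 2) {x : ℝ}
    (hx0 : 0 ≤ x) (hxA : x ≤ m / (β - 1)) :
    ∃ w : ℕ → ℝ, IsDigits m w ∧ val β w = x := by
  have hβ0 : (0:ℝ) < β := by linarith
  set w : ℕ → ℝ := fun i => gd β m (gX β m x i) with hw
  have hdig : IsDigits m w := fun k => gd_digit β m _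
  refine ⟨w, hdig, ?_⟩
  have hb : ∀ k, 0 ≤ w k ∧ w k ≤ m := digit_bounds (by linarith) hdig
  have hsum : Summable (fun k => w k / β ^ (k+1)) := summable_val hβ1 hb
  have htend1 : Tendsto (fun n => ∑ i ∈ Finset.range n, w i / β ^ (i+1)) atTop (𝓝 (val β w)) :=
    hsum.hasSum.tendsto_sum_nat
  have htend2 : Tendsto (fun n => ∑ i ∈ Finset.range n, w i / β ^ (i+1)) atTop (𝓝 x) := by
    have hXb := gX_invariant hm hβ1 hβ2 hx0 hxA
    have heq : ∀ n, ∑ i ∈ Finset.range n, w i / β ^ (i+1) = x - gX β m x n / β ^ n := by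
      intro n
      have := gX_partial (m := m) hβ1 (x := x) n
      linarith
    have htz : Tendsto (fun n : ℕ => gX β m x n / β ^ n) atTop (𝓝 0) := by
      have hgeo : Tendsto (fun n : ℕ => (m / (β-1)) * (β⁻¹) ^ n) atTop (𝓝 0) := by
        have := tendsto_pow_atTop_nhds_zero_of_lt_one (by positivity : (0:ℝ) ≤ β⁻¹)
          (inv_lt_one_of_one_lt₀ hβ1)
        simpa using this.const_mul (m / (β-1))
      refine squeeze_zero (fun n => ?_) (fun n => ?_) hgeo
      · exact div_nonneg (hXb n).1 (pow_pos hβ0 n).le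
      · rw [div_eq_mul_inv, ← inv_pow]
        exact mul_le_mul_of_nonneg_right (hXb n).2 (by positivity)
    have : Tendsto (fun n : ℕ => x - gX β m x n / β ^ n) atTop (𝓝 (x - 0)) :=
      tendsto_const_nhds.sub htz
    rw [sub_zero] at this
    exact this.congr (fun n => (heq n).symm)
  exact tendsto_nhds_unique htend1 htend2

lemma alt_expansion (hm : 1 < m) (hβ1 : 1 < β) (hβ2 : β < 2)
    (hu : IsUniqueExpansion m β u) (k : ℕ) (d' : ℝ)
    (hd' : d' = 0 ∨ d' = 1 ∨ d' = m) (hne : d' ≠ u k) (t' : ℝ)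
    (ht'0 : 0 ≤ t') (ht'A : t' ≤ m / (β - 1))
    (hsum : d' + t' = u k + val β (shift (k + 1) u)) : False := by
  obtain ⟨w, hwdig, hwval⟩ := greedy_val hm hβ1 hβ2 ht'0 ht'A
  set v : ℕ → ℝ := fun j => if j < k then u j else if j = k then d' else w (j - (k+1)) with hv
  have hvdig : IsDigits m v := by
    intro j
    by_cases h1 : j < k
    · simp only [hv, if_pos h1]; exact hu.1 j
    · by_cases h2 : j = k
      · simp only [hv, if_neg h1, if_pos h2]; exact hd'
      · simp only [hv, if_neg h1, if_neg h2]; exact hwdig _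
  have hbu : ∀ j, 0 ≤ u j ∧ u j ≤ m := digit_bounds (by linarith) hu.1
  have hbv : ∀ j, 0 ≤ v j ∧ v j ≤ m := digit_bounds (by linarith) hvdig
  have hshift : shift (k+1) v = w := by
    funext j
    have h1 : ¬ (k + 1 + j < k) := by omega
    have h2 : ¬ (k + 1 + j = k) := by omega
    simp only [shift, hv, if_neg h1, if_neg h2]
    congr 1
    omega
  have hvk : v k = d' := by
    show (if k < k then u k else if k = k then d' else w (k - (k+1))) = d'
    rw [if_neg (lt_irrefl k), if_pos rfl]
  have hpre : ∀ i ∈ Finset.range k, v i / β ^ (i+1) = u i / β ^ (i+1) := by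
    intro i hi
    rw [Finset.mem_range] at hi
    simp only [hv, if_pos hi]
  have hvval : val β v = val β u := by
    rw [val_prefix hβ1 hbv k, val_prefix hβ1 hbu k,
      val_shift_succ hβ1 hbv k, val_shift_succ hβ1 hbu k,
      Finset.sum_congr rfl hpre, hshift, hwval, hvk]
    rw [← hsum]
  have := hu.2 v hvdig hvval
  have : v k = u k := congrFun this k
  rw [hvk] at this
  exact hne this

lemma below_two (hm : 1 < m) (hβ1 : 1 < β) (hβ2 : β < 2)
    (hu : IsUniqueExpansion m β u) : u = (fun _ => 0) ∨ u = (fun _ => m) := by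
  have hβ0 : (0:ℝ) < β := by linarith
  have hb1 : (0:ℝ) < β - 1 := by linarith
  set A := m / (β - 1) with hA
  have hAm : m < A := by rw [hA, lt_div_iff₀ hb1]; nlinarith
  have hbu : ∀ j, 0 ≤ u j ∧ u j ≤ m := digit_bounds (by linarith) hu.1
  have hr0 : ∀ k, 0 ≤ val β (shift (k+1) u) :=
    fun k => val_nonneg (shift_bounds hbu (k+1)) hβ0
  have hrA : ∀ k, val β (shift (k+1) u) ≤ A :=
    fun k => val_le hβ1 (by linarith) (shift_bounds hbu (k+1))
  set r : ℕ → ℝ := fun k => val β (shift (k+1) u) with hrdef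
  -- necessity conditions
  have n0 : ∀ k, u k = 0 → r k < 1 := by
    intro k hk
    by_contra h
    push_neg at h
    exact alt_expansion hm hβ1 hβ2 hu k 1 (by tauto) (by rw [hk]; norm_num)
      (r k - 1) (by linarith) (by have := hrA k; linarith) (by rw [hk]; ring)
  have n1a : ∀ k, u k = 1 → r k < m - 1 := by
    intro k hk
    by_contra h
    push_neg at h
    exact alt_expansion hm hβ1 hβ2 hu k m (by tauto) (by rw [hk]; intro hc; linarith)
      (r k - (m - 1)) (by linarith) (by have := hrA k; linarith) (by rw [hk]; ring)
  have nma : ∀ k, u k = m → A - (m - 1) < r k := by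
    intro k hk
    by_contra h
    push_neg at h
    exact alt_expansion hm hβ1 hβ2 hu k 1 (by tauto) (by rw [hk]; intro hc; linarith)
      (r k + (m - 1)) (by have := hr0 k; linarith) (by linarith) (by rw [hk]; ring)
  have n1b : ∀ k, u k = 1 → A - 1 < r k := by
    intro k hk
    by_contra h
    push_neg at h
    exact alt_expansion hm hβ1 hβ2 hu k 0 (by tauto) (by rw [hk]; norm_num)
      (r k + 1) (by have := hr0 k; linarith) (by linarith) (by rw [hk]; ring)
  -- no digit equals 1
  have no1 : ∀ k, u k ≠ 1 := by
    intro k hk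
    have h1 := n1a k hk
    have h2 := n1b k hk
    linarith
  -- adjacent digit relations
  have hstep : ∀ k, r k = (u (k+1) + r (k+1)) / β := by
    intro k
    exact val_shift_succ hβ1 hbu (k+1)
  have hconst : ∀ k, u (k+1) = u k := by
    intro k
    rcases hu.1 k with hk | hk | hk
    · -- u k = 0
      rcases hu.1 (k+1) with hk1 | hk1 | hk1
      · rw [hk1, hk]
      · exact absurd hk1 (no1 (k+1))
      · exfalso
        have h1 := n0 k hk
        have h2 := nma (k+1) hk1
        have h3 := hstep k
        rw [hk1] at h3
        have : (m + r (k+1)) / β < 1 := by rw [← h3]; exact h1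
        rw [div_lt_one hβ0] at this
        linarith
    · exact absurd hk (no1 k)
    · -- u k = m
      rcases hu.1 (k+1) with hk1 | hk1 | hk1
      · exfalso
        have h1 := nma k hk
        have h2 := n0 (k+1) hk1
        have h3 := hstep k
        rw [hk1] at h3
        have h4 : r k = r (k+1) / β := by rw [h3]; ring_nf
        have h5 : r (k+1) / β < 1 := by
          rw [div_lt_one hβ0]; linarith
        rw [h4] at h1
        linarith
      · exact absurd hk1 (no1 (k+1))
      · rw [hk1, hk]
  have hallconst : ∀ k, u k = u 0 := by
    intro k
    induction k with
    | zero => rfl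
    | succ k ih => rw [hconst k, ih]
  rcases hu.1 0 with h0 | h0 | h0
  · left; funext k; rw [hallconst k, h0]
  · exact absurd h0 (no1 0)
  · right; funext k; rw [hallconst k, h0]

lemma unique_of_window (hm : 1 < m) (hβ : 1 < β) (hd : IsDigits m u)
    (h0 : ∀ k, u k = 0 → val β (shift (k+1) u) < 1)
    (h1 : ∀ k, u k = 1 → m/(β-1) - 1 < val β (shift (k+1) u) ∧ val β (shift (k+1) u) < m - 1)
    (hmm : ∀ k, u k = m → m/(β-1) - (m-1) < val β (shift (k+1) u)) :
    IsUniqueExpansion m β u := by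
  have hβ0 : (0:ℝ) < β := by linarith
  refine ⟨hd, ?_⟩
  intro v hvdig hval
  have hval' : val β v = val β u := hval
  have hbu : ∀ j, 0 ≤ u j ∧ u j ≤ m := digit_bounds (by linarith) hd
  have hbv : ∀ j, 0 ≤ v j ∧ v j ≤ m := digit_bounds (by linarith) hvdig
  have key : ∀ k, (∀ j, j < k → v j = u j) → v k = u k := by
    intro k hpre
    have ht := tail_eq hβ hbv hbu hval' k hpre
    have hs0 : 0 ≤ val β (shift (k+1) v) := val_nonneg (shift_bounds hbv (k+1)) hβ0
    have hsA : val β (shift (k+1) v) ≤ m / (β-1) := val_le hβ (by linarith) (shift_bounds hbv (k+1))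
    have hr0 : 0 ≤ val β (shift (k+1) u) := val_nonneg (shift_bounds hbu (k+1)) hβ0
    have hrA : val β (shift (k+1) u) ≤ m / (β-1) := val_le hβ (by linarith) (shift_bounds hbu (k+1))
    rcases hd k with hu0 | hu1 | hum <;> rcases hvdig k with hv0 | hv1 | hvm
    · rw [hu0, hv0]
    · exfalso
      have := h0 k hu0
      rw [hu0, hv1] at ht
      linarith
    · exfalso
      have := h0 k hu0
      rw [hu0, hvm] at ht
      linarith
    · exfalso
      have := (h1 k hu1).1
      rw [hu1, hv0] at ht
      linarith
    · rw [hu1, hv1]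
    · exfalso
      have := (h1 k hu1).2
      rw [hu1, hvm] at ht
      linarith
    · exfalso
      have := hmm k hum
      rw [hum, hv0] at ht
      linarith
    · exfalso
      have := hmm k hum
      rw [hum, hv1] at ht
      linarith
    · rw [hum, hvm]
  funext k
  induction k using Nat.strong_induction_on with
  | _ k ih => exact key k ih


lemma cpow_anti (hβ : 1 < β) {p q : ℕ} (h : p ≤ q) : (β⁻¹) ^ q ≤ (β⁻¹) ^ p :=
  pow_le_pow_of_le_one (inv_pos' hβ).le (inv_lt_one' hβ).le h

def iE (α : ℝ) (k : ℕ) : ℤ := ⌊((k : ℝ) + 1) * α⌋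
def iEc (α : ℝ) (k : ℕ) : ℤ := ⌈((k : ℝ) + 1) * α⌉
def Phi (β α : ℝ) : ℝ := ∑' k : ℕ, (β⁻¹) ^ (iE α k).toNat
def Phic (β α : ℝ) : ℝ := ∑' k : ℕ, (β⁻¹) ^ (iEc α k).toNat

lemma iE_ge (hα : 1 ≤ α) (k : ℕ) : (k + 1 : ℤ) ≤ iE α k := by
  rw [iE, Int.le_floor]
  push_cast
  nlinarith [Nat.cast_nonneg (α := ℝ) k]

lemma iE_nonneg (hα : 1 ≤ α) (k : ℕ) : (0:ℤ) ≤ iE α k := le_trans (by omega) (iE_ge hα k)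

lemma iEc_nonneg (hα : 1 ≤ α) (k : ℕ) : (0:ℤ) ≤ iEc α k :=
  le_trans (iE_nonneg hα k) (Int.floor_le_ceil _)

lemma tE_ge (hα : 1 ≤ α) (k : ℕ) : k + 1 ≤ (iE α k).toNat := by
  rw [Int.le_toNat (iE_nonneg hα k)]
  exact_mod_cast iE_ge hα k

lemma tEc_ge (hα : 1 ≤ α) (k : ℕ) : k + 1 ≤ (iEc α k).toNat :=
  le_trans (tE_ge hα k) (Int.toNat_le_toNat (Int.floor_le_ceil _))

lemma summable_exp (hβ : 1 < β) (e : ℕ → ℕ) (he : ∀ k, k + 1 ≤ e k) :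
    Summable (fun k : ℕ => (β⁻¹) ^ (e k)) := by
  refine Summable.of_nonneg_of_le (fun k => by positivity) (fun k => ?_)
    ((summable_geom hβ).mul_left β⁻¹)
  calc (β⁻¹ : ℝ) ^ (e k) ≤ (β⁻¹) ^ (k+1) := cpow_anti hβ (he k)
    _ = β⁻¹ * (β⁻¹)^k := by rw [pow_succ]; ring

lemma tsum_exp_le (hβ : 1 < β) (e : ℕ → ℕ) (he : ∀ k, k + 1 ≤ e k) :
    ∑' k : ℕ, (β⁻¹) ^ (e k) ≤ 1 / (β - 1) := by
  rw [← tsum_geom_inv hβ]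
  refine Summable.tsum_le_tsum (fun k => ?_) (summable_exp hβ e he) ((summable_geom hβ).mul_left β⁻¹)
  calc (β⁻¹ : ℝ) ^ (e k) ≤ (β⁻¹) ^ (k+1) := cpow_anti hβ (he k)
    _ = β⁻¹ * (β⁻¹)^k := by rw [pow_succ]; ring

lemma summable_Phi (hβ : 1 < β) (hα : 1 ≤ α) :
    Summable (fun k : ℕ => (β⁻¹) ^ (iE α k).toNat) := summable_exp hβ _ (tE_ge hα)

lemma summable_Phic (hβ : 1 < β) (hα : 1 ≤ α) :
    Summable (fun k : ℕ => (β⁻¹) ^ (iEc α k).toNat) := summable_exp hβ _ (tEc_ge hα)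

lemma Phi_le (hβ : 1 < β) (hα : 1 ≤ α) : Phi β α ≤ 1 / (β - 1) :=
  tsum_exp_le hβ _ (tE_ge hα)

lemma Phi_mono (hβ : 1 < β) {α α' : ℝ} (hα : 1 ≤ α) (h : α ≤ α') : Phi β α' ≤ Phi β α := by
  have hα' : 1 ≤ α' := le_trans hα h
  refine Summable.tsum_le_tsum (fun k => cpow_anti hβ ?_) (summable_Phi hβ hα') (summable_Phi hβ hα)
  apply Int.toNat_le_toNat
  apply Int.floor_le_floor
  have : (0:ℝ) ≤ (k:ℝ) + 1 := by positivity
  exact mul_le_mul_of_nonneg_left h this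

lemma Phi_one (hβ : 1 < β) : Phi β 1 = 1 / (β - 1) := by
  rw [Phi, ← tsum_geom_inv hβ]
  apply tsum_congr
  intro k
  have h1 : iE 1 k = (k : ℤ) + 1 := by
    rw [iE, mul_one]
    rw [show ((k:ℝ) + 1) = ((k:ℤ) + 1 : ℤ) by push_cast; ring, Int.floor_intCast]
  rw [h1]
  rw [show ((k:ℤ)+1).toNat = k + 1 by omega]
  rw [pow_succ]; ring

lemma tail_bound (hβ : 1 < β) (e : ℕ → ℕ) (he : ∀ k, k + 1 ≤ e k) (K : ℕ) :
    ∑' k : ℕ, (β⁻¹) ^ (e k) ≤ (∑ k ∈ Finset.range K, (β⁻¹) ^ (e k)) + (β⁻¹)^K * (1/(β-1)) := by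
  have hsum := summable_exp hβ e he
  have hsplit := Summable.sum_add_tsum_nat_add (f := fun k => (β⁻¹) ^ (e k)) K hsum
  rw [← hsplit]
  have htail : ∑' k : ℕ, (β⁻¹) ^ (e (k + K)) ≤ (β⁻¹)^K * (1/(β-1)) := by
    have h1 : ∀ k : ℕ, (β⁻¹ : ℝ) ^ (e (k+K)) ≤ (β⁻¹)^K * (β⁻¹ * (β⁻¹)^k) := by
      intro k
      calc (β⁻¹ : ℝ) ^ (e (k+K)) ≤ (β⁻¹) ^ (k + K + 1) := cpow_anti hβ (he (k+K))
        _ = (β⁻¹)^K * (β⁻¹ * (β⁻¹)^k) := by rw [show k + K + 1 = K + (k+1) by omega, pow_add, pow_succ]; ring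
    calc ∑' k : ℕ, (β⁻¹ : ℝ) ^ (e (k + K)) ≤ ∑' k : ℕ, (β⁻¹)^K * (β⁻¹ * (β⁻¹)^k) := by
          refine Summable.tsum_le_tsum h1 ?_ (((summable_geom hβ).mul_left β⁻¹).mul_left _)
          exact (summable_nat_add_iff K).mpr hsum
      _ = (β⁻¹)^K * (1/(β-1)) := by rw [tsum_mul_left, tsum_geom_inv hβ]
  linarith

lemma exists_alpha (hβ : 1 < β) {a b : ℝ} (hb0 : 0 < b) (hab : β * a < b) (hb1 : b ≤ 1/(β-1)) :
    ∃ α : ℝ, 1 ≤ α ∧ Phi β α < b ∧ a < Phic β α := by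
  have hβ0 : (0:ℝ) < β := by linarith
  have hc0 : (0:ℝ) < β⁻¹ := inv_pos' hβ
  have hc1 : β⁻¹ < 1 := inv_lt_one' hβ
  -- the set A₀
  set S : Set ℝ := {α : ℝ | 1 ≤ α ∧ b ≤ Phi β α} with hS
  have h1S : (1:ℝ) ∈ S := ⟨le_refl 1, by rw [Phi_one hβ]; exact hb1⟩
  -- bounded above
  obtain ⟨N, hN⟩ : ∃ N : ℕ, (β⁻¹)^N * (β/(β-1)) < b := by
    have h0 : Tendsto (fun N : ℕ => (β⁻¹)^N * (β/(β-1))) atTop (𝓝 0) := by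
      simpa using (tendsto_pow_atTop_nhds_zero_of_lt_one hc0.le hc1).mul_const (β/(β-1))
    have := (h0.eventually (eventually_lt_nhds hb0)).exists
    simpa using this
  have hbdd : BddAbove S := by
    refine ⟨(N:ℝ) + 1, fun α hα => ?_⟩
    by_contra hcon
    push_neg at hcon
    have hα1 : 1 ≤ α := hα.1
    have hN' : ((N:ℝ)) ≤ α := by linarith
    have hle : Phi β α ≤ (β⁻¹)^N * (β/(β-1)) := by
      have h2 : ∀ k : ℕ, (β⁻¹ : ℝ)^((iE α k).toNat) ≤ (β⁻¹)^N * (β⁻¹)^k := by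
        intro k
        have h3 : (N + k : ℤ) ≤ iE α k := by
          rw [iE, Int.le_floor]
          push_cast
          have hk0 : (0:ℝ) ≤ k := Nat.cast_nonneg k
          nlinarith
        have h4 : N + k ≤ (iE α k).toNat := by
          rw [Int.le_toNat (iE_nonneg hα1 k)]
          exact_mod_cast h3
        calc (β⁻¹ : ℝ)^((iE α k).toNat) ≤ (β⁻¹)^(N+k) := cpow_anti hβ h4
          _ = (β⁻¹)^N * (β⁻¹)^k := pow_add _ _ _
      calc Phi β α ≤ ∑' k : ℕ, (β⁻¹)^N * (β⁻¹)^k :=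
            Summable.tsum_le_tsum h2 (summable_Phi hβ hα1) ((summable_geom hβ).mul_left _)
        _ = (β⁻¹)^N * (β/(β-1)) := by
            rw [tsum_mul_left, tsum_geometric_of_lt_one hc0.le hc1]
            congr 1
            rw [eq_div_iff (by linarith : β - 1 ≠ 0)]
            have h5 : (1:ℝ) - β⁻¹ = (β - 1)/β := by field_simp
            rw [h5]
            rw [inv_div, div_mul_cancel₀ _ (by linarith : β - 1 ≠ 0)]
    have := hα.2
    linarith
  set α₀ := sSup S with hα₀
  have hα₀1 : 1 ≤ α₀ := le_csSup hbdd h1S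
  have hup : ∀ γ, α₀ < γ → Phi β γ < b := by
    intro γ hγ
    by_contra hcon
    push_neg at hcon
    have : γ ∈ S := ⟨by linarith, hcon⟩
    have := le_csSup hbdd this
    linarith
  have hlow : ∀ γ, 1 ≤ γ → γ < α₀ → b ≤ Phi β γ := by
    intro γ hγ1 hγ
    obtain ⟨α', hα'S, hα'⟩ := exists_lt_of_lt_csSup ⟨1, h1S⟩ hγ
    exact le_trans hα'S.2 (Phi_mono hβ hγ1 hα'.le)
  -- choose K
  obtain ⟨K₀, hK₀⟩ : ∃ K : ℕ, (β⁻¹)^K * (1/(β-1)) < b - β * a := by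
    have h0 : Tendsto (fun K : ℕ => (β⁻¹)^K * (1/(β-1))) atTop (𝓝 0) := by
      simpa using (tendsto_pow_atTop_nhds_zero_of_lt_one hc0.le hc1).mul_const (1/(β-1))
    exact (h0.eventually (eventually_lt_nhds (by linarith))).exists
  set K := K₀ + 1 with hK
  have hKtail : (β⁻¹)^K * (1/(β-1)) < b - β * a := by
    refine lt_of_le_of_lt ?_ hK₀
    apply mul_le_mul_of_nonneg_right (cpow_anti hβ (by omega))
    have : (0:ℝ) < β - 1 := by linarith
    positivity
  have hKne : (Finset.range K).Nonempty := ⟨0, by simp [hK]⟩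
  -- partial-sum lower bound machinery
  have key : ∀ γ γ' : ℝ, 1 ≤ γ' →
      (∀ k ∈ Finset.range K, (iEc α₀ k ≤ iE γ' k + 1) ∨ True) → True := fun _ _ _ _ => trivial
  by_cases hcase : b ≤ Phi β α₀
  · -- E1 : take α̂ = α₀ + ε
    set δ := (Finset.range K).inf' hKne
      (fun k => ((⌊((k:ℝ)+1)*α₀⌋ : ℝ) + 1 - ((k:ℝ)+1)*α₀)) with hδ
    have hδpos : 0 < δ := by
      rw [hδ, Finset.lt_inf'_iff]
      intro k _
      have := Int.lt_floor_add_one (((k:ℝ)+1)*α₀)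
      linarith
    set ε := δ / (K+1) with hε
    have hεpos : 0 < ε := by positivity
    set γ := α₀ + ε with hγdef
    have hγ1 : 1 ≤ γ := by linarith
    refine ⟨γ, hγ1, hup γ (by linarith), ?_⟩
    -- termwise : iEc γ k ≤ iE α₀ k + 1 for k < K
    have hterm : ∀ k ∈ Finset.range K, (β⁻¹ : ℝ) * (β⁻¹)^((iE α₀ k).toNat) ≤ (β⁻¹)^((iEc γ k).toNat) := by
      intro k hk
      have hint : iEc γ k ≤ iE α₀ k + 1 := by
        rw [iEc, Int.ceil_le]
        push_cast
        have h6 : ((k:ℝ)+1) * γ = ((k:ℝ)+1)*α₀ + ((k:ℝ)+1)*ε := by ring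
        have h7 : ((k:ℝ)+1)*ε ≤ δ := by
          have h24 : ((k:ℝ)+1) ≤ (K:ℝ) := by
            have := Finset.mem_range.mp hk
            exact_mod_cast Nat.succ_le_of_lt this
          have h25 : ((k:ℝ)+1)*ε ≤ (K:ℝ)*ε := mul_le_mul_of_nonneg_right h24 hεpos.le
          have h26 : (K:ℝ)*ε = (K:ℝ)*(δ/(K+1)) := by rw [hε]
          have h27 : (K:ℝ)*(δ/(K+1)) ≤ δ := by
            rw [mul_div_assoc']
            rw [div_le_iff₀ (by positivity : (0:ℝ) < (K:ℝ)+1)]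
            nlinarith [hδpos]
          linarith
        have h9 : δ ≤ ((⌊((k:ℝ)+1)*α₀⌋ : ℝ) + 1 - ((k:ℝ)+1)*α₀) :=
          Finset.inf'_le _ hk
        rw [h6]
        simp only [iE]
        push_cast
        linarith
      have hnat : (iEc γ k).toNat ≤ (iE α₀ k).toNat + 1 := by
        rw [Int.toNat_le]
        push_cast
        rw [Int.toNat_of_nonneg (iE_nonneg hα₀1 k)]
        exact_mod_cast hint
      calc (β⁻¹:ℝ) * (β⁻¹)^((iE α₀ k).toNat) = (β⁻¹)^((iE α₀ k).toNat + 1) := by rw [pow_succ]; ring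
        _ ≤ (β⁻¹)^((iEc γ k).toNat) := cpow_anti hβ hnat
    -- assemble
    have hsum1 : β⁻¹ * (∑ k ∈ Finset.range K, (β⁻¹)^((iE α₀ k).toNat)) ≤
        ∑ k ∈ Finset.range K, (β⁻¹)^((iEc γ k).toNat) := by
      rw [Finset.mul_sum]
      exact Finset.sum_le_sum hterm
    have hsum2 : (∑ k ∈ Finset.range K, (β⁻¹)^((iEc γ k).toNat)) ≤ Phic β γ :=
      Summable.sum_le_tsum _ (fun k _ => by positivity) (summable_Phic hβ hγ1)
    have hsum3 : Phi β α₀ ≤ (∑ k ∈ Finset.range K, (β⁻¹)^((iE α₀ k).toNat)) + (β⁻¹)^K * (1/(β-1)) :=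
      tail_bound hβ _ (tE_ge hα₀1) K
    have hfin : β⁻¹ * (b - (β⁻¹)^K * (1/(β-1))) ≤ Phic β γ := by
      have h10 : b - (β⁻¹)^K * (1/(β-1)) ≤ ∑ k ∈ Finset.range K, (β⁻¹)^((iE α₀ k).toNat) := by
        linarith
      calc β⁻¹ * (b - (β⁻¹)^K * (1/(β-1))) ≤ β⁻¹ * ∑ k ∈ Finset.range K, (β⁻¹)^((iE α₀ k).toNat) :=
            mul_le_mul_of_nonneg_left h10 hc0.le
        _ ≤ Phic β γ := le_trans hsum1 hsum2
    have h11 : a < β⁻¹ * (b - (β⁻¹)^K * (1/(β-1))) := by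
      have h12 : β * a < b - (β⁻¹)^K * (1/(β-1)) := by linarith
      have := mul_lt_mul_of_pos_left h12 hc0
      rw [← mul_assoc, inv_mul_cancel₀ hβ0.ne', one_mul] at this
      exact this
    linarith
  · -- E2 : α̂ = α₀
    push_neg at hcase
    have hα₀gt1 : 1 < α₀ := by
      rcases lt_or_eq_of_le hα₀1 with h | h
      · exact h
      · exfalso
        rw [← h, Phi_one hβ] at hcase
        linarith
    set δ := (Finset.range K).inf' hKne
      (fun k => (((k:ℝ)+1)*α₀ - ((⌈((k:ℝ)+1)*α₀⌉ : ℝ) - 1))) with hδ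
    have hδpos : 0 < δ := by
      rw [hδ, Finset.lt_inf'_iff]
      intro k _
      have := Int.ceil_lt_add_one (((k:ℝ)+1)*α₀)
      linarith
    set ε := min (δ / (K+1)) ((α₀ - 1)/2) with hε
    have hεpos : 0 < ε := by
      apply lt_min
      · positivity
      · linarith
    set γ' := α₀ - ε with hγ'def
    have hγ'1 : 1 ≤ γ' := by
      have : ε ≤ (α₀ - 1)/2 := min_le_right _ _
      rw [hγ'def]
      linarith
    have hγ'lt : γ' < α₀ := by rw [hγ'def]; linarith
    refine ⟨α₀, hα₀1, hcase, ?_⟩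
    have hterm : ∀ k ∈ Finset.range K, (β⁻¹ : ℝ) * (β⁻¹)^((iE γ' k).toNat) ≤ (β⁻¹)^((iEc α₀ k).toNat) := by
      intro k hk
      have hint : iEc α₀ k ≤ iE γ' k + 1 := by
        have h20 : (iEc α₀ k - 1 : ℤ) ≤ iE γ' k := by
          rw [iE, Int.le_floor]
          have h21 : ((k:ℝ)+1)*γ' = ((k:ℝ)+1)*α₀ - ((k:ℝ)+1)*ε := by rw [hγ'def]; ring
          have h22 : ((k:ℝ)+1)*ε ≤ δ := by
            have h23 : ε ≤ δ/(K+1) := min_le_left _ _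
            have h24 : ((k:ℝ)+1) ≤ (K:ℝ) := by
              have := Finset.mem_range.mp hk
              exact_mod_cast Nat.succ_le_of_lt this
            have h25 : ((k:ℝ)+1)*ε ≤ (K:ℝ)*ε := mul_le_mul_of_nonneg_right h24 hεpos.le
            have h26 : (K:ℝ)*ε ≤ (K:ℝ)*(δ/(K+1)) := mul_le_mul_of_nonneg_left h23 (Nat.cast_nonneg K)
            have h27 : (K:ℝ)*(δ/(K+1)) ≤ δ := by
              rw [mul_div_assoc']
              rw [div_le_iff₀ (by positivity : (0:ℝ) < (K:ℝ)+1)]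
              nlinarith [hδpos]
            linarith
          have h28 : δ ≤ (((k:ℝ)+1)*α₀ - ((⌈((k:ℝ)+1)*α₀⌉ : ℝ) - 1)) := Finset.inf'_le _ hk
          rw [h21]
          simp only [iEc]
          push_cast
          linarith
        omega
      have hnat : (iEc α₀ k).toNat ≤ (iE γ' k).toNat + 1 := by
        rw [Int.toNat_le]
        push_cast
        rw [Int.toNat_of_nonneg (iE_nonneg hγ'1 k)]
        exact_mod_cast hint
      calc (β⁻¹:ℝ) * (β⁻¹)^((iE γ' k).toNat) = (β⁻¹)^((iE γ' k).toNat + 1) := by rw [pow_succ]; ring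
        _ ≤ (β⁻¹)^((iEc α₀ k).toNat) := cpow_anti hβ hnat
    have hsum1 : β⁻¹ * (∑ k ∈ Finset.range K, (β⁻¹)^((iE γ' k).toNat)) ≤
        ∑ k ∈ Finset.range K, (β⁻¹)^((iEc α₀ k).toNat) := by
      rw [Finset.mul_sum]
      exact Finset.sum_le_sum hterm
    have hsum2 : (∑ k ∈ Finset.range K, (β⁻¹)^((iEc α₀ k).toNat)) ≤ Phic β α₀ :=
      Summable.sum_le_tsum _ (fun k _ => by positivity) (summable_Phic hβ hα₀1)
    have hsum3 : Phi β γ' ≤ (∑ k ∈ Finset.range K, (β⁻¹)^((iE γ' k).toNat)) + (β⁻¹)^K * (1/(β-1)) :=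
      tail_bound hβ _ (tE_ge hγ'1) K
    have hblow : b ≤ Phi β γ' := hlow γ' hγ'1 hγ'lt
    have hfin : β⁻¹ * (b - (β⁻¹)^K * (1/(β-1))) ≤ Phic β α₀ := by
      have h10 : b - (β⁻¹)^K * (1/(β-1)) ≤ ∑ k ∈ Finset.range K, (β⁻¹)^((iE γ' k).toNat) := by
        linarith
      calc β⁻¹ * (b - (β⁻¹)^K * (1/(β-1))) ≤ β⁻¹ * ∑ k ∈ Finset.range K, (β⁻¹)^((iE γ' k).toNat) :=
            mul_le_mul_of_nonneg_left h10 hc0.le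
        _ ≤ Phic β α₀ := le_trans hsum1 hsum2
    have h11 : a < β⁻¹ * (b - (β⁻¹)^K * (1/(β-1))) := by
      have h12 : β * a < b - (β⁻¹)^K * (1/(β-1)) := by linarith
      have := mul_lt_mul_of_pos_left h12 hc0
      rw [← mul_assoc, inv_mul_cancel₀ hβ0.ne', one_mul] at this
      exact this
    linarith


def pos (α : ℝ) (j : ℕ) : ℕ := (iE α j).toNat

lemma pos_cast (hα : 1 ≤ α) (j : ℕ) : (pos α j : ℤ) = iE α j :=
  Int.toNat_of_nonneg (iE_nonneg hα j)

lemma pos_ge (hα : 1 ≤ α) (j : ℕ) : j + 1 ≤ pos α j := tE_ge hα j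

lemma iE_gap_low (j t : ℕ) : iE α j + iE α t ≤ iE α (j + 1 + t) := by
  rw [iE, iE, iE, Int.le_floor]
  have h1 := Int.floor_le (((j:ℝ)+1) * α)
  have h2 := Int.floor_le (((t:ℝ)+1) * α)
  have harg : (((j + 1 + t : ℕ) : ℝ) + 1) * α = ((j:ℝ)+1) * α + ((t:ℝ)+1) * α := by
    push_cast; ring
  rw [harg]
  push_cast
  linarith

lemma iE_gap_high (j t : ℕ) : iE α (j + 1 + t) ≤ iE α j + iEc α t := by
  rw [iE, iE, iEc]
  have harg : (((j + 1 + t : ℕ) : ℝ) + 1) * α = ((j:ℝ)+1) * α + ((t:ℝ)+1) * α := by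
    push_cast; ring
  rw [harg]
  have h1 : (((j:ℝ)+1) * α + ((t:ℝ)+1) * α) ≤ ((j:ℝ)+1) * α + (⌈((t:ℝ)+1) * α⌉ : ℝ) := by
    have := Int.le_ceil (((t:ℝ)+1) * α)
    linarith
  calc ⌊((j:ℝ)+1) * α + ((t:ℝ)+1) * α⌋ ≤ ⌊((j:ℝ)+1) * α + (⌈((t:ℝ)+1) * α⌉ : ℝ)⌋ :=
        Int.floor_le_floor h1
    _ = ⌊((j:ℝ)+1) * α⌋ + ⌈((t:ℝ)+1) * α⌉ := Int.floor_add_intCast _ _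
 
lemma pos_gap_low (hα : 1 ≤ α) (j t : ℕ) : pos α j + (iE α t).toNat ≤ pos α (j + 1 + t) := by
  have h1 := iE_gap_low (α := α) j t
  have h2 := pos_cast hα j
  have h3 := pos_cast hα (j+1+t)
  have h4 := iE_nonneg hα t
  omega

lemma pos_gap_high (hα : 1 ≤ α) (j t : ℕ) : pos α (j + 1 + t) ≤ pos α j + (iEc α t).toNat := by
  have h1 := iE_gap_high (α := α) j t
  have h2 := pos_cast hα j
  have h3 := pos_cast hα (j+1+t)
  have h4 := iEc_nonneg hα t
  omega

lemma pos_strictMono (hα : 1 ≤ α) : StrictMono (pos α) := by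
  apply strictMono_nat_of_lt_succ
  intro j
  have h1 := pos_gap_low hα j 0
  have h2 := tE_ge hα 0
  have : j + 1 + 0 = j + 1 := by omega
  rw [this] at h1
  omega

open Classical in
def uB (α : ℝ) : ℕ → ℝ := fun k => if ∃ j : ℕ, pos α j = k + 1 then 1 else 0

lemma uB_bounds : ∀ k, 0 ≤ uB α k ∧ uB α k ≤ 1 := by
  intro k
  rw [uB]
  split_ifs <;> norm_num

lemma uB_digits (hm : 1 < m) : IsDigits m (uB α) := by
  intro k
  rw [uB]
  split_ifs <;> tauto

lemma uB_one (hα : 1 ≤ α) (j : ℕ) : uB α (pos α j - 1) = 1 := by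
  rw [uB]
  rw [if_pos]
  exact ⟨j, by have := pos_ge hα j; omega⟩

lemma uB_tail (hβ : 1 < β) (hα : 1 ≤ α) (j k : ℕ) (hk : pos α j = k + 1) :
    val β (shift (k+1) (uB α)) = ∑' t : ℕ, (β⁻¹) ^ (pos α (j+1+t) - pos α j) := by
  rw [val]
  have hβ0 : (0:ℝ) < β := by linarith
  refine tsum_eq_tsum_of_ne_zero_bij (fun t => pos α (j+1+t.1) - (k+2)) ?_ ?_ ?_
  · -- injective
    intro t t' h
    have h1 := pos_gap_low hα j t.1
    have h2 := pos_gap_low hα j t'.1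
    have h3 := tE_ge hα t.1
    have h4 := tE_ge hα t'.1
    have h5 : pos α (j+1+t.1) = pos α (j+1+t'.1) := by
      simp only at h
      omega
    have := (pos_strictMono hα).injective h5
    exact Subtype.ext (by omega)
  · -- support f ⊆ range
    intro i hi
    simp only [Function.mem_support] at hi
    have hne : shift (k+1) (uB α) i ≠ 0 := by
      intro h0
      rw [shift] at h0
      apply hi
      rw [shift, h0]
      simp
    rw [shift, uB] at hne
    by_cases hex : ∃ j'' : ℕ, pos α j'' = k + 1 + i + 1
    · obtain ⟨j'', hj''⟩ := hex
      have hgt : j < j'' := by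
        by_contra hle
        push_neg at hle
        have := (pos_strictMono hα).monotone hle
        omega
      refine ⟨⟨j'' - (j+1), ?_⟩, ?_⟩
      · simp only [Function.mem_support]
        positivity
      · simp only
        have : j + 1 + (j'' - (j+1)) = j'' := by omega
        rw [this]
        omega
    · exfalso
      apply hne
      rw [if_neg]
      intro ⟨j'', hj''⟩
      exact hex ⟨j'', by omega⟩
  · -- values agree
    intro t
    have h1 := pos_gap_low hα j t.1
    have h3 := tE_ge hα t.1
    have hidx : k + 1 + (pos α (j+1+t.1) - (k+2)) = pos α (j+1+t.1) - 1 := by omega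
    rw [shift, hidx, uB_one hα (j+1+t.1)]
    have hexp : pos α (j+1+t.1) - (k+2) + 1 = pos α (j+1+t.1) - pos α j := by omega
    rw [hexp, one_div, ← inv_pow]

lemma uB_tail_bounds (hβ : 1 < β) (hα : 1 ≤ α) (j k : ℕ) (hk : pos α j = k + 1) :
    Phic β α ≤ val β (shift (k+1) (uB α)) ∧ val β (shift (k+1) (uB α)) ≤ Phi β α := by
  rw [uB_tail hβ hα j k hk]
  have hsum : Summable (fun t : ℕ => (β⁻¹) ^ (pos α (j+1+t) - pos α j)) := by
    apply summable_exp hβ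
    intro t
    have h1 := pos_gap_low hα j t
    have h3 := tE_ge hα t
    omega
  constructor
  · refine Summable.tsum_le_tsum (fun t => cpow_anti hβ ?_) (summable_Phic hβ hα) hsum
    have h1 := pos_gap_high hα j t
    omega
  · refine Summable.tsum_le_tsum (fun t => cpow_anti hβ ?_) hsum (summable_Phi hβ hα)
    have h1 := pos_gap_low hα j t
    omega

lemma one_lt_sqrt (hm : 1 < m) : 1 < Real.sqrt m := by
  have h0 : (0:ℝ) ≤ m := by linarith
  rw [show (1:ℝ) = Real.sqrt 1 by simp]
  exact Real.sqrt_lt_sqrt (by norm_num) hm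

lemma exists_nontrivial (hm1 : 1 < m) (hm2 : m ≤ 2) (hβ : 1 + Real.sqrt m < β) :
    ∃ u : ℕ → ℝ, IsUniqueExpansion m β u ∧ u ≠ (fun _ => 0) ∧ u ≠ (fun _ => m) := by
  have hs1 : 1 < Real.sqrt m := one_lt_sqrt hm1
  have hβ2 : 2 < β := by linarith
  have hβ1 : 1 < β := by linarith
  have hβ0 : (0:ℝ) < β := by linarith
  have hD : (0:ℝ) < β - 1 := by linarith
  have hkey : m < (β - 1)^2 := by
    nlinarith [Real.sq_sqrt (by linarith : (0:ℝ) ≤ m), Real.sqrt_nonneg m]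
  have hmβ : m < β := by linarith
  have hab : β * (m/(β-1) - 1) < m - 1 := by
    have e1 : m/(β-1) - 1 = (m - (β-1))/(β-1) := by field_simp
    rw [e1, ← mul_div_assoc, div_lt_iff₀ hD]
    nlinarith [hkey]
  by_cases hcase : m - 1 ≤ 1/(β-1)
  · -- Beatty construction
    obtain ⟨α, hα1, hPhi, hPhic⟩ := exists_alpha hβ1 (by linarith : (0:ℝ) < m - 1) hab hcase
    refine ⟨uB α, ?_, ?_, ?_⟩
    · apply unique_of_window hm1 hβ1 (uB_digits hm1)
      · intro k _
        have h1 : val β (shift (k+1) (uB α)) ≤ 1/(β-1) :=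
          val_le hβ1 zero_le_one (shift_bounds uB_bounds (k+1))
        have : 1/(β-1) < 1 := by
          rw [div_lt_one hD]; linarith
        linarith
      · intro k hk
        have hex : ∃ j : ℕ, pos α j = k + 1 := by
          by_contra hnex
          rw [uB, if_neg hnex] at hk
          norm_num at hk
        obtain ⟨j, hj⟩ := hex
        obtain ⟨hlo, hhi⟩ := uB_tail_bounds hβ1 hα1 j k hj
        constructor
        · linarith
        · linarith
      · intro k hk
        exfalso
        have hb := (uB_bounds (α := α) k).2
        rw [hk] at hb
        linarith
    · intro hcon
      have := congrFun hcon (pos α 0 - 1)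
      rw [uB_one hα1 0] at this
      norm_num at this
    · intro hcon
      have := congrFun hcon (pos α 0 - 1)
      rw [uB_one hα1 0] at this
      linarith
  · -- all-ones sequence
    push_neg at hcase
    set u : ℕ → ℝ := fun _ => 1 with hu
    have hub : ∀ k, 0 ≤ u k ∧ u k ≤ 1 := fun k => by norm_num [hu]
    have hval : ∀ n, val β (shift n u) = 1/(β-1) := by
      intro n
      have : shift n u = u := by funext k; rfl
      rw [this, val, ← tsum_geom_inv hβ1]
      apply tsum_congr
      intro k
      rw [hu]
      simp only
      rw [one_div, pow_succ, mul_inv, ← inv_pow]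
      ring
    refine ⟨u, ?_, ?_, ?_⟩
    · apply unique_of_window hm1 hβ1 (fun k => by rw [hu]; tauto)
      · intro k hk
        rw [hu] at hk
        norm_num at hk
      · intro k _
        rw [hval]
        constructor
        · have h2 : m/(β-1) - 1/(β-1) = (m-1)/(β-1) := by field_simp
          have h3 : (m-1)/(β-1) < 1 := by
            rw [div_lt_one hD]
            linarith
          linarith
        · exact hcase
      · intro k hk
        rw [hu] at hk
        simp only at hk
        linarith
    · intro hcon
      have := congrFun hcon 0
      rw [hu] at this
      norm_num at this
    · intro hcon
      have := congrFun hcon 0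
      rw [hu] at this
      simp only at this
      linarith


end Stmt16
end

/-- for every m ∈ (1,2], the generalised golden ratio G(m) of {0,1,m}
satisfies 2 ≤ G(m) ≤ 1 + √m. -/
theorem stmt_16 (m : ℝ) (hm1 : 1 < m) (hm2 : m ≤ 2) (G : ℝ) (hG : IsGGR m G) :
    2 ≤ G ∧ G ≤ 1 + Real.sqrt m := by
  obtain ⟨hG1, hbelow, habove⟩ := hG
  constructor
  · by_contra hcon
    push_neg at hcon
    set β := (G + 2)/2 with hβdef
    have h1 : G < β := by rw [hβdef]; linarith
    have h2 : β < 2 := by rw [hβdef]; linarith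
    have h3 : 1 < β := by rw [hβdef]; linarith
    obtain ⟨u, hu, hu0, hum⟩ := habove β h1
    rcases Stmt16.below_two hm1 h3 h2 hu with h | h
    · exact hu0 h
    · exact hum h
  · by_contra hcon
    push_neg at hcon
    have hs1 : 1 < Real.sqrt m := Stmt16.one_lt_sqrt hm1
    set β := ((1 + Real.sqrt m) + G)/2 with hβdef
    have h1 : 1 + Real.sqrt m < β := by rw [hβdef]; linarith
    have h2 : β < G := by rw [hβdef]; linarith
    have h3 : 1 < β := by linarith
    obtain ⟨u, hu, hu0, hum⟩ := Stmt16.exists_nontrivial hm1 hm2 h1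
    rcases hbelow β h3 h2 u hu with h | h
    · exact hu0 h
    · exact hum h
end

section
/- Let u ∈ S_∞ (an aperiodic S-adic limit word over {0,1}), m = m_u the unique solution of m = 1 + Σ_{k≥0} u_k (1+√m)^{-k}, and β = 1 + √m. Then the number m/β has exactly two β-expansions over the alphabet {0,1,m}: one beginning with digit m followed by all zeros, and one beginning with digit 1 followed by the expansion u_1 u_2 … of m − 1. -/
def tauL (h : ℕ) (b : Bool) : List Bool :=
  if b then List.replicate h false ++ [true] else List.replicate (h + 1) false ++ [true]

def joinW (f : ℕ → List Bool) : ℕ → Bool :=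
  fun n => (((List.range (n + 1)).map f).flatten).getD n false

def applyTau (h : ℕ) (u : ℕ → Bool) : ℕ → Bool :=
  joinW fun n => tauL h (u n)

/-- u ∈ S_∞ : u is the limit word of a primitive sequence of substitutions
(τ_{hs n})_{n≥0}, where primitive means hs n ≠ 0 infinitely often. -/
def IsPrimitiveLimitWord (u : ℕ → Bool) : Prop :=
  ∃ hs : ℕ → ℕ, (∀ N, ∃ n ≥ N, hs n ≠ 0) ∧
    ∃ U : ℕ → ℕ → Bool, U 0 = u ∧ ∀ n, U n = applyTau (hs n) (U (n + 1))

/-!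
The limit word `u` is lexicographically smaller than each of its proper suffixes, and every
suffix that follows a letter `1` is smaller than `u₁u₂…`. Both properties pass from `U (n + 1)`
to `U n = τ_{h n} (U (n + 1))`, because `τ_h` is strictly monotone for the lexicographic order and
every `U n` starts with `0` (this is where primitivity enters). Since `β > 2`, the value of a
`0`/`1`-sequence is lexicographically monotone; as `val u = √m - 1` and `val (u₁u₂…) = m - 1`,
this gives `√m - 1 < val (u_{j+2} u_{j+3} …) < m - 1` whenever `u_{j+1} = 1`. These bounds rule out, digit by digit, any expansion of `m - 1` other than
`u₁u₂…`: a digit `0` would leave a tail larger than `m / (β - 1)`, a digit `m` a negative one.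
Finally the first digit of an expansion of `m / β` is `m` (followed by an expansion of `0`) or `1`
(followed by an expansion of `m - 1`).
-/

def shift {α : Type*} (c : ℕ) (x : ℕ → α) : ℕ → α := fun k => x (k + c)

@[simp]
lemma shift_apply {α : Type*} (c : ℕ) (x : ℕ → α) (k : ℕ) : shift c x k = x (k + c) := rfl

lemma shift_shift {α : Type*} (a b : ℕ) (x : ℕ → α) : shift a (shift b x) = shift (a + b) x := by
  funext k; simp [add_assoc]

lemma toLex_lt_toLex_iff {x y : ℕ → Bool} :
    toLex x < toLex y ↔ ∃ p, (∀ q < p, x q = y q) ∧ x p = false ∧ y p = true :=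
  exists_congr fun _ => and_congr Iff.rfl Bool.lt_iff

lemma toLex_lt_of_shift {x y : ℕ → Bool} (c : ℕ) (h : ∀ q < c, x q = y q)
    (hlt : toLex (shift c x) < toLex (shift c y)) : toLex x < toLex y := by
  obtain ⟨p, hp, hxy⟩ := toLex_lt_toLex_iff.mp hlt
  refine toLex_lt_toLex_iff.mpr ⟨p + c, fun q hq => ?_, hxy⟩
  rcases lt_or_ge q c with hqc | hqc
  · exact h q hqc
  · simpa [Nat.sub_add_cancel hqc] using hp (q - c) (by omega)

lemma toLex_lt_of_zeros {x y : ℕ → Bool} {a : ℕ} (hx : ∀ q ≤ a, x q = false)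
    (hy : ∀ q ≤ a, y q = decide (q = a)) : toLex x < toLex y := by
  refine toLex_lt_toLex_iff.mpr ⟨a, fun q hq => ?_, hx a le_rfl, by simp [hy a le_rfl]⟩
  rw [hx q hq.le, hy q hq.le, decide_eq_false (by omega)]

section Join

variable {f g : ℕ → List Bool}

def blockStart (f : ℕ → List Bool) (j : ℕ) : ℕ := ∑ i ∈ Finset.range j, (f i).length

def joinPrefix (f : ℕ → List Bool) (N : ℕ) : List Bool := ((List.range N).map f).flatten

lemma blockStart_add (a b : ℕ) :
    blockStart f (a + b) = blockStart f a + blockStart (shift a f) b := by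
  simp only [blockStart, Finset.sum_range_add, shift_apply, add_comm]

lemma blockStart_succ (j : ℕ) : blockStart f (j + 1) = blockStart f j + (f j).length :=
  Finset.sum_range_succ _ _

lemma blockStart_congr {N : ℕ} (h : ∀ i < N, f i = g i) : blockStart f N = blockStart g N :=
  Finset.sum_congr rfl fun i hi => by rw [h i (Finset.mem_range.mp hi)]

lemma joinPrefix_add (N d : ℕ) :
    joinPrefix f (N + d) = joinPrefix f N ++ joinPrefix (shift N f) d := by
  simp only [joinPrefix, List.range_add, List.map_append, List.flatten_append, List.map_map]
  congr 3
  funext k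
  simp [add_comm]

@[simp]
lemma joinPrefix_one : joinPrefix f 1 = f 0 := by
  simp [joinPrefix]

lemma length_joinPrefix (N : ℕ) : (joinPrefix f N).length = blockStart f N := by
  induction N with
  | zero => rfl
  | succ N ih => simp [joinPrefix_add, ih, blockStart_succ]

lemma joinPrefix_congr {N : ℕ} (h : ∀ i < N, f i = g i) : joinPrefix f N = joinPrefix g N := by
  simp only [joinPrefix]
  congr 1
  exact List.map_congr_left fun i hi => h i (List.mem_range.mp hi)

lemma getD_joinPrefix_of_le {n N M : ℕ} (hn : n < blockStart f N) (hNM : N ≤ M) :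
    (joinPrefix f M).getD n false = (joinPrefix f N).getD n false := by
  obtain ⟨d, rfl⟩ := Nat.exists_eq_add_of_le hNM
  rw [joinPrefix_add, List.getD_append _ _ _ _ (by rwa [length_joinPrefix])]

variable (hf : ∀ i, f i ≠ [])
include hf

lemma le_blockStart (N : ℕ) : N ≤ blockStart f N := by
  induction N with
  | zero => rfl
  | succ N ih => rw [blockStart_succ]; have := List.length_pos_iff.mpr (hf N); omega

lemma joinW_eq_getD_joinPrefix {n N : ℕ} (hn : n < blockStart f N) :
    joinW f n = (joinPrefix f N).getD n false := by
  change (joinPrefix f (n + 1)).getD n false = _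
  rcases le_total N (n + 1) with h | h
  · exact getD_joinPrefix_of_le hn h
  · exact (getD_joinPrefix_of_le ((le_blockStart hf _).trans_lt' n.lt_succ_self) h).symm

lemma joinW_blockStart_add {j r : ℕ} (hr : r < (f j).length) :
    joinW f (blockStart f j + r) = (f j).getD r false := by
  rw [joinW_eq_getD_joinPrefix hf (N := j + 1) (by rw [blockStart_succ]; omega), joinPrefix_add,
    List.getD_append_right _ _ _ _ (by rw [length_joinPrefix]; omega), length_joinPrefix]
  simp

lemma exists_eq_blockStart_add (n : ℕ) : ∃ j r, n = blockStart f j + r ∧ r < (f j).length := by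
  induction n with
  | zero => exact ⟨0, 0, rfl, List.length_pos_iff.mpr (hf 0)⟩
  | succ n ih =>
    obtain ⟨j, r, rfl, hr⟩ := ih
    by_cases hr' : r + 1 < (f j).length
    · exact ⟨j, r + 1, rfl, hr'⟩
    · exact ⟨j + 1, 0, by rw [blockStart_succ]; omega, List.length_pos_iff.mpr (hf _)⟩

lemma shift_joinW (j : ℕ) : shift (blockStart f j) (joinW f) = joinW (shift j f) := by
  funext n
  have hf' : ∀ i, shift j f i ≠ [] := fun i => hf (i + j)
  obtain ⟨i, r, rfl, hr⟩ := exists_eq_blockStart_add hf' n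
  rw [shift_apply, joinW_blockStart_add hf' hr, add_comm, ← add_assoc, ← blockStart_add,
    joinW_blockStart_add hf (by simpa [add_comm] using hr)]
  simp [add_comm]

lemma joinW_eq_of_lt_blockStart (hg : ∀ i, g i ≠ []) {N n : ℕ} (h : ∀ i < N, f i = g i)
    (hn : n < blockStart f N) : joinW f n = joinW g n := by
  rw [joinW_eq_getD_joinPrefix hf hn, joinW_eq_getD_joinPrefix hg (blockStart_congr h ▸ hn),
    joinPrefix_congr h]

end Join

section Tau

def tauZeros (h : ℕ) (b : Bool) : ℕ := if b then h else h + 1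

lemma tauL_eq (h : ℕ) (b : Bool) : tauL h b = List.replicate (tauZeros h b) false ++ [true] := by
  cases b <;> rfl

lemma getD_replicate_append_singleton (z r : ℕ) :
    (List.replicate z false ++ [true]).getD r false = decide (r = z) := by
  rcases lt_trichotomy r z with h | rfl | h
  · rw [List.getD_append _ _ _ _ (by simpa), List.getD_replicate _ h, decide_eq_false h.ne]
  · simp
  · rw [List.getD_eq_default _ _ (by simp; omega), decide_eq_false h.ne']

variable {h : ℕ} {w w' : ℕ → Bool}

lemma tauL_ne_nil (b : Bool) : tauL h b ≠ [] := by simp [tauL_eq]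

lemma length_tauL (b : Bool) : (tauL h b).length = tauZeros h b + 1 := by simp [tauL_eq]

lemma applyTau_eq_joinW : applyTau h w = joinW (tauL h ∘ w) := rfl

lemma blockStart_tauL_succ (j : ℕ) :
    blockStart (tauL h ∘ w) (j + 1) = blockStart (tauL h ∘ w) j + tauZeros h (w j) + 1 := by
  simp [blockStart_succ, tauL_eq, add_assoc]

lemma applyTau_blockStart_add {j r : ℕ} (hr : r ≤ tauZeros h (w j)) :
    applyTau h w (blockStart (tauL h ∘ w) j + r) = decide (r = tauZeros h (w j)) := by
  rw [applyTau_eq_joinW,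
    joinW_blockStart_add (f := tauL h ∘ w) (fun _ => tauL_ne_nil _) (by simp [tauL_eq]; omega),
    Function.comp_apply, tauL_eq, getD_replicate_append_singleton]

lemma applyTau_of_le_tauZeros {q : ℕ} (hq : q ≤ tauZeros h (w 0)) :
    applyTau h w q = decide (q = tauZeros h (w 0)) := by
  simpa [blockStart] using applyTau_blockStart_add (j := 0) hq

lemma shift_applyTau (j : ℕ) :
    shift (blockStart (tauL h ∘ w) j) (applyTau h w) = applyTau h (shift j w) :=
  shift_joinW (fun _ => tauL_ne_nil _) j

lemma add_lt_blockStart_tauL (hw0 : w 0 = false) {k : ℕ} (hk : 0 < k) :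
    k + h < blockStart (tauL h ∘ w) k := by
  induction k, hk using Nat.le_induction with
  | base => simp [blockStart, hw0, tauL_eq, tauZeros]; omega
  | succ k _ ih => rw [blockStart_tauL_succ]; omega

lemma toLex_applyTau_lt (hlt : toLex w < toLex w') :
    toLex (applyTau h w) < toLex (applyTau h w') := by
  obtain ⟨p, hagree, hwp, hw'p⟩ := toLex_lt_toLex_iff.mp hlt
  have hstart : blockStart (tauL h ∘ w) p = blockStart (tauL h ∘ w') p :=
    blockStart_congr fun i hi => by simp [hagree i hi]
  refine toLex_lt_of_shift (blockStart (tauL h ∘ w) p) (fun q hq => ?_) ?_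
  · exact joinW_eq_of_lt_blockStart (fun _ => tauL_ne_nil _) (fun _ => tauL_ne_nil _)
      (fun i hi => by simp [hagree i hi]) hq
  rw [shift_applyTau, hstart, shift_applyTau]
  refine toLex_lt_of_zeros (a := h) (fun q hq => ?_) (fun q hq => ?_)
  · rw [applyTau_of_le_tauZeros] <;> simp [tauZeros, hwp] <;> omega
  · rw [applyTau_of_le_tauZeros] <;> simp [tauZeros, hw'p, hq]

end Tau

section TauStep

variable {h : ℕ} {w : ℕ → Bool}

lemma applyTau_of_head_false (hw0 : w 0 = false) {q : ℕ} (hq : q ≤ h + 1) :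
    applyTau h w q = decide (q = h + 1) := by
  rw [applyTau_of_le_tauZeros] <;> simp [tauZeros, hw0, hq]

lemma toLex_applyTau_lt_shift (hw0 : w 0 = false) {i : ℕ} (hi : 0 < i)
    (hw : ∀ j, 0 < j → j < i → toLex w < toLex (shift j w)) :
    toLex (applyTau h w) < toLex (shift i (applyTau h w)) := by
  obtain ⟨j, r, rfl, hr⟩ :=
    exists_eq_blockStart_add (f := tauL h ∘ w) (fun _ => tauL_ne_nil _) i
  rw [Function.comp_apply, length_tauL] at hr
  -- Unless the suffix starts with the image of a letter `0`, it starts with at most `h` zeros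
  -- and a `1`, whereas `applyTau h w` starts with `h + 1` zeros.
  by_cases hblock : r = 0 ∧ w j = false
  · obtain ⟨rfl, -⟩ := hblock
    have hj : 0 < j := Nat.pos_of_ne_zero (by rintro rfl; simp [blockStart] at hi)
    have := add_lt_blockStart_tauL (h := h) hw0 hj
    rw [add_zero, shift_applyTau]
    exact toLex_applyTau_lt (hw j hj (by omega))
  · have hz : tauZeros h (w j) - r ≤ h := by
      cases hwj : w j <;> simp [tauZeros, hwj] at hblock ⊢
      omega
    refine toLex_lt_of_zeros (a := tauZeros h (w j) - r) (fun q hq => ?_) (fun q hq => ?_)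
    · rw [applyTau_of_head_false hw0 (by omega), decide_eq_false (by omega)]
    · rw [shift_apply, add_comm, add_assoc, applyTau_blockStart_add (by omega)]
      simp only [decide_eq_decide]
      omega

lemma toLex_shift_applyTau_lt (hw0 : w 0 = false) {j : ℕ} (hj : applyTau h w j = true)
    (hw : ∀ k ≤ j, (h ≠ 0 → k < j) → w k = true →
      toLex (shift (k + 1) w) < toLex (shift 1 w)) :
    toLex (shift (j + 1) (applyTau h w)) < toLex (shift 1 (applyTau h w)) := by
  obtain ⟨j', r, rfl, hr⟩ :=
    exists_eq_blockStart_add (f := tauL h ∘ w) (fun _ => tauL_ne_nil _) j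
  rw [Function.comp_apply, length_tauL] at hr
  have hr' : r = tauZeros h (w j') := by
    simpa [applyTau_blockStart_add (show r ≤ tauZeros h (w j') by omega)] using hj
  have hnext : blockStart (tauL h ∘ w) j' + r + 1 = blockStart (tauL h ∘ w) (j' + 1) := by
    rw [blockStart_tauL_succ, hr']
  have hk := add_lt_blockStart_tauL (h := h) hw0 (k := j' + 1) (by omega)
  have hone : ∀ q ≤ h, shift 1 (applyTau h w) q = decide (q = h) := fun q hq => by
    rw [shift_apply, applyTau_of_head_false hw0 (by omega)]
    simp
  rw [hnext, shift_applyTau]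
  cases hwk : w (j' + 1)
  · refine toLex_lt_of_zeros (fun q hq => ?_) hone
    rw [applyTau_of_head_false (by simpa using hwk) (by omega), decide_eq_false (by omega)]
  · refine toLex_lt_of_shift (h + 1) (fun q hq => ?_) ?_
    · rw [hone q (by omega), applyTau_of_le_tauZeros (by simp [tauZeros, hwk]; omega)]
      simp [tauZeros, hwk]
    have h1 : blockStart (tauL h ∘ shift (j' + 1) w) 1 = h + 1 := by
      simp [blockStart, tauL_eq, tauZeros, hwk]
    have h2 : blockStart (tauL h ∘ w) 1 = h + 1 + 1 := by
      simp [blockStart, tauL_eq, tauZeros, hw0]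
    have e1 :
        shift (h + 1) (applyTau h (shift (j' + 1) w)) = applyTau h (shift (j' + 1 + 1) w) := by
      rw [← h1, shift_applyTau, shift_shift, add_comm]
    have e2 : shift (h + 1) (shift 1 (applyTau h w)) = applyTau h (shift 1 w) := by
      rw [shift_shift, ← h2, shift_applyTau]
    rw [e1, e2]
    exact toLex_applyTau_lt (hw (j' + 1) (by omega) (fun _ => by omega) hwk)

end TauStep

section LimitWord

variable {hs : ℕ → ℕ} {U : ℕ → ℕ → Bool}

lemma forall_of_frequently_ne_zero (hprim : ∀ N, ∃ n ≥ N, hs n ≠ 0) {P : ℕ → Prop}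
    (hP : ∀ n, (hs n = 0 → P (n + 1)) → P n) (n : ℕ) : P n := by
  suffices ∀ d n, hs (n + d) ≠ 0 → P n by
    obtain ⟨N, hN, hsN⟩ := hprim n
    exact this (N - n) n (by rwa [Nat.add_sub_cancel' hN])
  intro d
  induction d with
  | zero => exact fun n hn => hP n fun h => absurd h hn
  | succ d ih => exact fun n hn => hP n fun _ => ih (n + 1) (by rwa [add_right_comm, add_assoc])

variable (hprim : ∀ N, ∃ n ≥ N, hs n ≠ 0) (hU : ∀ n, U n = applyTau (hs n) (U (n + 1)))
include hprim hU

lemma head_eq_false (n : ℕ) : U n 0 = false := by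
  refine forall_of_frequently_ne_zero hprim (P := fun n => U n 0 = false) (fun n ih => ?_) n
  rw [hU n, applyTau_of_le_tauZeros (Nat.zero_le _)]
  by_cases h0 : hs n = 0
  · simp [ih h0, tauZeros]
  · cases U (n + 1) 0 <;> simp [tauZeros]
    omega

lemma toLex_lt_shift {i : ℕ} (hi : 0 < i) (n : ℕ) : toLex (U n) < toLex (shift i (U n)) := by
  induction i using Nat.strong_induction_on generalizing n with
  | _ i ih =>
    rw [hU n]
    exact toLex_applyTau_lt_shift (head_eq_false hprim hU _) hi fun j hj hji => ih j hji hj _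

lemma toLex_shift_lt {j n : ℕ} (hj : U n j = true) :
    toLex (shift (j + 1) (U n)) < toLex (shift 1 (U n)) := by
  induction j using Nat.strong_induction_on generalizing n with
  | _ j ihj =>
    revert hj
    refine forall_of_frequently_ne_zero hprim
      (P := fun n => U n j = true → toLex (shift (j + 1) (U n)) < toLex (shift 1 (U n)))
      (fun n ih hj => ?_) n
    rw [hU n] at hj ⊢
    refine toLex_shift_applyTau_lt (head_eq_false hprim hU _) hj fun k hkj hk hwk => ?_
    -- the index only fails to drop when `hs n = 0`; primitivity bounds such runs of `n`
    rcases hkj.lt_or_eq with hlt | rfl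
    · exact ihj k hlt hwk
    · exact ih (by_contra fun h => (hk h).false) hwk

end LimitWord

lemma eq_of_apply_zero_of_shift_one {α : Type*} {f g : ℕ → α} (h0 : f 0 = g 0)
    (h1 : shift 1 f = shift 1 g) : f = g := by
  funext k
  cases k with
  | zero => exact h0
  | succ k => exact congrFun h1 k

section Expansion

variable {β C : ℝ}

noncomputable def betaVal (β : ℝ) (c : ℕ → ℝ) : ℝ := ∑' k, c k / β ^ (k + 1)

noncomputable def bits (x : ℕ → Bool) : ℕ → ℝ := fun k => if x k then 1 else 0

@[simp]
lemma bits_shift (j : ℕ) (x : ℕ → Bool) : bits (shift j x) = shift j (bits x) := rfl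

lemma bits_of_eq_true {x : ℕ → Bool} {k : ℕ} (h : x k = true) : bits x k = 1 := by
  simp [bits, h]

lemma bits_of_eq_false {x : ℕ → Bool} {k : ℕ} (h : x k = false) : bits x k = 0 := by
  simp [bits, h]

lemma bits_mem_Icc (x : ℕ → Bool) (k : ℕ) : bits x k ∈ Set.Icc (0 : ℝ) 1 := by
  unfold bits; split <;> simp

lemma hasSum_div_pow_succ (hβ : 1 < β) (C : ℝ) :
    HasSum (fun k : ℕ => C / β ^ (k + 1)) (C / (β - 1)) := by
  have hgeo := (hasSum_geometric_of_lt_one (inv_nonneg.mpr (by linarith : (0 : ℝ) ≤ β))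
    (inv_lt_one_of_one_lt₀ hβ)).mul_left (C / β)
  have hterm : (fun k : ℕ => C / β ^ (k + 1)) = fun k => C / β * β⁻¹ ^ k := by
    funext k; rw [inv_pow, pow_succ]; field_simp
  have hsum : C / (β - 1) = C / β * (1 - β⁻¹)⁻¹ := by
    field_simp [(by linarith : β - 1 ≠ 0)]
  rwa [hterm, hsum]

lemma betaVal_nonneg (hβ : 0 ≤ β) {c : ℕ → ℝ} (hc : ∀ k, 0 ≤ c k) : 0 ≤ betaVal β c :=
  tsum_nonneg fun k => div_nonneg (hc k) (by positivity)

lemma mul_betaVal (hβ : β ≠ 0) (c : ℕ → ℝ) : β * betaVal β c = ∑' k, c k / β ^ k := by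
  rw [betaVal, ← tsum_mul_left]
  congr 1; funext k; field_simp; ring

@[simp]
lemma betaVal_zero : betaVal β 0 = 0 := by
  simp [betaVal]

variable (hβ : 1 < β) {c : ℕ → ℝ} (hc : ∀ k, c k ∈ Set.Icc 0 C)
include hβ hc

lemma summable_betaVal : Summable fun k => c k / β ^ (k + 1) :=
  (hasSum_div_pow_succ hβ C).summable.of_nonneg_of_le
    (fun k => div_nonneg (hc k).1 (by positivity))
    (fun k => div_le_div_of_nonneg_right (hc k).2 (by positivity))

lemma betaVal_le : betaVal β c ≤ C / (β - 1) :=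
  hasSum_le (fun k => div_le_div_of_nonneg_right (hc k).2 (by positivity))
    (summable_betaVal hβ hc).hasSum (hasSum_div_pow_succ hβ C)

lemma betaVal_eq_head_add : betaVal β c = (c 0 + betaVal β (shift 1 c)) / β := by
  rw [betaVal, (summable_betaVal hβ hc).tsum_eq_zero_add, add_div, betaVal, ← tsum_div_const]
  simp [pow_succ, div_div]

lemma betaVal_shift_one_eq_tsum (hc0 : c 0 = 0) : betaVal β (shift 1 c) = ∑' k, c k / β ^ k := by
  rw [← mul_betaVal (by linarith), betaVal_eq_head_add hβ hc, hc0, zero_add,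
    mul_div_cancel₀ _ (by linarith)]

end Expansion

section Uniqueness

variable {β m : ℝ}

lemma betaVal_lt_one (hβ : 2 < β) {c : ℕ → ℝ} (hc : ∀ k, c k ∈ Set.Icc 0 1) :
    betaVal β c < 1 := by
  refine (betaVal_le (by linarith) hc).trans_lt ?_
  rw [div_lt_one (by linarith)]
  linarith

lemma mem_Icc_of_digit (hm : 1 < m) {a : ℝ} (ha : a = 0 ∨ a = 1 ∨ a = m) : a ∈ Set.Icc 0 m := by
  rcases ha with rfl | rfl | rfl <;> constructor <;> linarith

lemma betaVal_bits_lt (hβ : 2 < β) {x y : ℕ → Bool} (h : toLex x < toLex y) :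
    betaVal β (bits x) < betaVal β (bits y) := by
  have hβ1 : 1 < β := by linarith
  obtain ⟨p, hagree, hx, hy⟩ := toLex_lt_toLex_iff.mp h
  clear h
  induction p generalizing x y with
  | zero =>
    have hlt := betaVal_lt_one hβ (c := shift 1 (bits x)) fun k => bits_mem_Icc x _
    have hnn : 0 ≤ betaVal β (shift 1 (bits y)) :=
      betaVal_nonneg (by linarith) fun k => (bits_mem_Icc y _).1
    rw [betaVal_eq_head_add hβ1 (bits_mem_Icc x), betaVal_eq_head_add hβ1 (bits_mem_Icc y),
      bits_of_eq_false hx, bits_of_eq_true hy]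
    exact div_lt_div_of_pos_right (by linarith) (by linarith)
  | succ p ih =>
    rw [betaVal_eq_head_add hβ1 (bits_mem_Icc x), betaVal_eq_head_add hβ1 (bits_mem_Icc y),
      show bits x 0 = bits y 0 by simp [bits, hagree 0 p.succ_pos]]
    gcongr
    exact ih (x := shift 1 x) (y := shift 1 y) (fun q hq => hagree (q + 1) (by omega)) hx hy

lemma head_eq_bits_of_betaVal_eq (hβ : 2 < β) (hm : 1 < m) {x : ℕ → Bool}
    (hx : x 0 = true → betaVal β (bits (shift 1 x)) ∈ Set.Ioo (m / (β - 1) - 1) (m - 1))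
    {w : ℕ → ℝ} (hw : ∀ k, w k = 0 ∨ w k = 1 ∨ w k = m)
    (h : betaVal β w = betaVal β (bits x)) : w 0 = bits x 0 := by
  have hβ1 : 1 < β := by linarith
  have hwI : ∀ k, w k ∈ Set.Icc 0 m := fun k => mem_Icc_of_digit hm (hw k)
  rw [betaVal_eq_head_add hβ1 hwI, betaVal_eq_head_add hβ1 (bits_mem_Icc x),
    div_left_inj' (by linarith)] at h
  have hT := betaVal_le hβ1 (c := shift 1 w) fun k => hwI _
  have hT0 : 0 ≤ betaVal β (shift 1 w) := betaVal_nonneg (by linarith) fun k => (hwI _).1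
  have hV := betaVal_lt_one hβ (c := shift 1 (bits x)) fun k => bits_mem_Icc x _
  have hV0 : 0 ≤ betaVal β (shift 1 (bits x)) :=
    betaVal_nonneg (by linarith) fun k => (bits_mem_Icc x _).1
  cases hx0 : x 0
  · rw [bits_of_eq_false hx0] at h ⊢
    rcases hw 0 with h0 | h0 | h0 <;> rw [h0] at h ⊢ <;> linarith
  · obtain ⟨hlo, hhi⟩ : betaVal β (shift 1 (bits x)) ∈ Set.Ioo (m / (β - 1) - 1) (m - 1) :=
      hx hx0
    rw [bits_of_eq_true hx0] at h ⊢
    rcases hw 0 with h0 | h0 | h0 <;> rw [h0] at h ⊢ <;> linarith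

lemma eq_bits_of_betaVal_eq (hβ : 2 < β) (hm : 1 < m) {x : ℕ → Bool}
    (hx : ∀ j, x j = true →
      betaVal β (bits (shift (j + 1) x)) ∈ Set.Ioo (m / (β - 1) - 1) (m - 1))
    {w : ℕ → ℝ} (hw : ∀ k, w k = 0 ∨ w k = 1 ∨ w k = m)
    (h : betaVal β w = betaVal β (bits x)) : w = bits x := by
  have hβ1 : 1 < β := by linarith
  have hhead : ∀ j, betaVal β (shift j w) = betaVal β (bits (shift j x)) →
      w j = bits x j := fun j hj => by
    simpa using head_eq_bits_of_betaVal_eq hβ hm (x := shift j x)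
      (fun h0 => by rw [shift_shift, add_comm]; exact hx j (by simpa using h0)) (fun k => hw _) hj
  have htail : ∀ j, betaVal β (shift j w) = betaVal β (bits (shift j x)) := by
    intro j
    induction j with
    | zero => exact h
    | succ j ih =>
      have hj := ih
      rw [betaVal_eq_head_add hβ1 (c := shift j w) (fun k => mem_Icc_of_digit hm (hw _)),
        betaVal_eq_head_add hβ1 (bits_mem_Icc (shift j x)), div_left_inj' (by linarith)] at hj
      simpa [shift_shift, add_comm, hhead j ih] using hj
  exact funext fun j => hhead j (htail j)

lemma eq_or_eq_of_betaVal_eq_div (hβ : 2 < β) (hm : 1 < m) {x : ℕ → Bool}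
    (hx : ∀ j, x j = true →
      betaVal β (bits (shift (j + 1) x)) ∈ Set.Ioo (m / (β - 1) - 1) (m - 1))
    (hxm : betaVal β (bits x) = m - 1) {v : ℕ → ℝ} (hv : ∀ k, v k = 0 ∨ v k = 1 ∨ v k = m)
    (h : betaVal β v = m / β) :
    (v 0 = m ∧ shift 1 v = 0) ∨ (v 0 = 1 ∧ shift 1 v = bits x) := by
  have hβ1 : 1 < β := by linarith
  have hvI : ∀ k, v k ∈ Set.Icc 0 m := fun k => mem_Icc_of_digit hm (hv k)
  rw [betaVal_eq_head_add hβ1 hvI, div_left_inj' (by linarith)] at h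
  have hvtail : ∀ k, shift 1 v k = 0 ∨ shift 1 v k = 1 ∨ shift 1 v k = m := fun k => hv _
  rcases hv 0 with h0 | h0 | h0
  · have hle := betaVal_le hβ1 (c := shift 1 v) fun k => hvI _
    have hlt : m / (β - 1) < m := div_lt_self (by linarith) (by linarith)
    linarith
  · exact Or.inr ⟨h0, eq_bits_of_betaVal_eq hβ hm hx hvtail (by linarith)⟩
  · have hzero : bits (fun _ => false) = 0 := by funext; simp [bits]
    refine Or.inl ⟨h0, hzero ▸ eq_bits_of_betaVal_eq hβ hm (by simp) hvtail ?_⟩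
    rw [hzero, betaVal_zero]
    linarith

end Uniqueness

/-- for u ∈ S_∞, m = m_u and β = 1+√m, the number m/β has exactly two
β-expansions over {0,1,m}: m·0^ω and 1·u_1u_2…. -/
theorem stmt_18 (u : ℕ → Bool) (hS : IsPrimitiveLimitWord u)
    (m : ℝ) (hm1 : 1 < m)
    (hme : m = 1 + ∑' k : ℕ, (if u k then (1 : ℝ) else 0) / (1 + Real.sqrt m) ^ k) :
    ((∑' k : ℕ, (if k = 0 then m else 0) / (1 + Real.sqrt m) ^ (k + 1)) =
        m / (1 + Real.sqrt m)) ∧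
    ((∑' k : ℕ, (if k = 0 then (1 : ℝ) else if u k then 1 else 0) / (1 + Real.sqrt m) ^ (k + 1)) =
        m / (1 + Real.sqrt m)) ∧
    (fun k : ℕ => if k = 0 then m else 0) ≠
      (fun k : ℕ => if k = 0 then (1 : ℝ) else if u k then 1 else 0) ∧
    ∀ v : ℕ → ℝ, (∀ k, v k = 0 ∨ v k = 1 ∨ v k = m) →
      (∑' k : ℕ, v k / (1 + Real.sqrt m) ^ (k + 1)) = m / (1 + Real.sqrt m) →
      v = (fun k : ℕ => if k = 0 then m else 0) ∨
        v = (fun k : ℕ => if k = 0 then (1 : ℝ) else if u k then 1 else 0) := by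
  obtain ⟨hs, hprim, U, rfl, hU⟩ := hS
  set β := 1 + Real.sqrt m with hβ_def
  have hsq : (β - 1) ^ 2 = m := by rw [hβ_def, add_sub_cancel_left, Real.sq_sqrt (by linarith)]
  have hβ : 2 < β := by nlinarith [Real.sqrt_nonneg m]
  have hu0 := head_eq_false hprim hU 0
  have htail : betaVal β (bits (shift 1 (U 0))) = m - 1 := by
    rw [bits_shift, betaVal_shift_one_eq_tsum (by linarith) (bits_mem_Icc _)
      (bits_of_eq_false hu0), hme]
    simp [bits]
  have hval : betaVal β (bits (U 0)) = m / (β - 1) - 1 := by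
    rw [betaVal_eq_head_add (by linarith) (bits_mem_Icc _), bits_of_eq_false hu0, ← bits_shift,
      htail, ← hsq]
    field_simp
    ring
  have hx : ∀ j, shift 1 (U 0) j = true → betaVal β (bits (shift (j + 1) (shift 1 (U 0)))) ∈
      Set.Ioo (m / (β - 1) - 1) (m - 1) := fun j hj => by
    rw [shift_shift]
    exact ⟨hval ▸ betaVal_bits_lt hβ (toLex_lt_shift hprim hU (by omega) 0),
      htail ▸ betaVal_bits_lt hβ (toLex_shift_lt hprim hU hj)⟩
  have hsecond : shift 1 (fun k : ℕ => if k = 0 then (1 : ℝ) else if U 0 k then 1 else 0) =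
      bits (shift 1 (U 0)) :=
    funext fun _ => rfl
  refine ⟨?_, ?_, fun h => by simpa [hm1.ne'] using congrFun h 0, fun v hv hsum => ?_⟩
  · rw [tsum_eq_single 0 fun k hk => by simp [hk]]
    simp
  · change betaVal β _ = m / β
    rw [betaVal_eq_head_add (C := 1) (by linarith) (fun k => by split_ifs <;> simp), hsecond,
      htail]
    simp
  · rcases eq_or_eq_of_betaVal_eq_div hβ hm1 hx htail hv hsum with ⟨h0, h1⟩ | ⟨h0, h1⟩
    · exact Or.inl (eq_of_apply_zero_of_shift_one (by simp [h0]) (by rw [h1]; funext k; simp))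
    · exact Or.inr (eq_of_apply_zero_of_shift_one (by simp [h0]) (by rw [h1, hsecond]))
end
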